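/- arXiv:0904.1319 — 3 statements merged into one kernel-verified Lean document; each statement's English description precedes it below -/
import Mathlib

section
/- If G is a finite free graph with girth at least 5, then φ(G) ≤ χ(G) + 4. -/
open SimpleGraph

variable {V : Type*} {W : Type*}

/-- An independent set in a simple graph. -/
def IsIndep (G : SimpleGraph V) (s : Set V) : Prop :=
  ∀ ⦃u⦄, u ∈ s → ∀ ⦃v⦄, v ∈ s → ¬ G.Adj u v

/-- A maximal independent set. -/
def IsMaxIndep (G : SimpleGraph V) (s : Set V) : Prop :=
  IsIndep G s ∧ ∀ t : Set V, IsIndep G t → s ⊆ t → s = t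

/-- A free independent set: an independent set contained in at least two
distinct maximal independent sets. -/
def IsFreeIndep (G : SimpleGraph V) (s : Set V) : Prop :=
  IsIndep G s ∧ ∃ M₁ M₂ : Set V, IsMaxIndep G M₁ ∧ IsMaxIndep G M₂ ∧ M₁ ≠ M₂ ∧ s ⊆ M₁ ∧ s ⊆ M₂

/-- A free graph: every vertex lies in some free independent set. -/
def IsFreeGraph (G : SimpleGraph V) : Prop :=
  ∀ v : V, ∃ F : Set V, IsFreeIndep G F ∧ v ∈ F

/-- A partition of the vertices into `t` free independent sets. -/
def FreePartition (G : SimpleGraph V) (t : ℕ) : Prop :=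
  ∃ P : Fin t → Set V, (∀ i, IsFreeIndep G (P i)) ∧ ∀ v : V, ∃! i, v ∈ P i

/-- The free chromatic number `φ(G)` (`∞` if no free partition exists). -/
noncomputable def freeChrom (G : SimpleGraph V) : ℕ∞ :=
  sInf {t : ℕ∞ | ∃ n : ℕ, t = n ∧ FreePartition G n}

/-- The chromatic number as a natural number. -/
noncomputable def chromNum (G : SimpleGraph V) : ℕ :=
  sInf {k : ℕ | G.Colorable k}

/-- The circular complete graph `K_{n/d}`. -/
def circKG (n d : ℕ) : SimpleGraph (Fin n) where
  Adj i j := i ≠ j ∧ d ≤ ((i : ℤ) - (j : ℤ)).natAbs ∧ ((i : ℤ) - (j : ℤ)).natAbs ≤ n - d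
  symm := by
    constructor
    intro i j h
    obtain ⟨h1, h2, h3⟩ := h
    refine ⟨h1.symm, ?_, ?_⟩ <;> omega
  loopless := by constructor; intro i h; exact h.1 rfl

/-- The circular chromatic number, as a real number. -/
noncomputable def circChrom (G : SimpleGraph V) : ℝ :=
  sInf {x : ℝ | ∃ n d : ℕ, 0 < d ∧ Nat.gcd n d = 1 ∧ x = (n : ℝ) / d ∧
    Nonempty (G →g circKG n d)}

/-- The Mycielskian of a graph. -/
def mycielskian (G : SimpleGraph V) : SimpleGraph (Option (V ⊕ V)) where
  Adj x y := match x, y with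
    | some (Sum.inl u), some (Sum.inl v) => G.Adj u v
    | some (Sum.inl u), some (Sum.inr v) => G.Adj u v
    | some (Sum.inr u), some (Sum.inl v) => G.Adj u v
    | some (Sum.inr _), none => True
    | none, some (Sum.inr _) => True
    | _, _ => False
  symm := by
    constructor
    rintro (_ | (u | u)) (_ | (v | v)) h <;> simp_all <;> exact G.adj_symm h
  loopless := by
    constructor
    rintro (_ | (u | u)) h <;> simp_all

/-- Vertex type of the iterated Mycielskian. -/
def MycV (V : Type u) : ℕ → Type u
  | 0 => V
  | t + 1 => Option (MycV V t ⊕ MycV V t)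

/-- The `t`-fold iterated Mycielskian. -/
def mycIter (G : SimpleGraph V) : ∀ t : ℕ, SimpleGraph (MycV V t)
  | 0 => G
  | t + 1 => mycielskian (mycIter G t)

/-- The maximum size of a free independent set. -/
noncomputable def freeAlpha (G : SimpleGraph V) : ℕ :=
  sSup {k : ℕ | ∃ F : Set V, IsFreeIndep G F ∧ k = F.ncard}

/-- The independence number. -/
noncomputable def alphaNum (G : SimpleGraph V) : ℕ :=
  sSup {k : ℕ | ∃ S : Set V, IsIndep G S ∧ k = S.ncard}

/-- `d(G)`: the minimum over edges `uv` of `|N(u) ∪ N(v)|`. -/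
noncomputable def dMin (G : SimpleGraph V) : ℕ :=
  sInf {k : ℕ | ∃ u v : V, G.Adj u v ∧ k = (G.neighborSet u ∪ G.neighborSet v).ncard}

/-- An `(a,b)`-free coloring of `G` with `t` colors. -/
def ABFree (G : SimpleGraph V) (a b t : ℕ) : Prop :=
  ∃ (P : Fin t → Set V) (e : Fin (t - a) → V × V),
    (∀ v : V, ∃! i, v ∈ P i) ∧
    (∀ i, IsIndep G (P i)) ∧
    (∀ i : Fin (t - a), IsFreeIndep G (P (Fin.castLE (Nat.sub_le t a) i))) ∧
    (∀ i : Fin (t - a), G.Adj (e i).1 (e i).2 ∧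
      (G.neighborSet (e i).1 ∪ G.neighborSet (e i).2) ∩ P (Fin.castLE (Nat.sub_le t a) i) = ∅) ∧
    (∀ v : V, Set.ncard {i : Fin (t - a) | v = (e i).1 ∨ v = (e i).2} ≤ b)

/-- The `(a,b)`-free chromatic number `φ^a_b(G)`. -/
noncomputable def abFreeChrom (G : SimpleGraph V) (a b : ℕ) : ℕ∞ :=
  sInf {t : ℕ∞ | ∃ n : ℕ, t = n ∧ ABFree G a b n}

/-- The Kneser graph `KG(m,n)`. -/
def kneser (m n : ℕ) : SimpleGraph {A : Finset (Fin m) // A.card = n} where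
  Adj A B := A ≠ B ∧ Disjoint A.1 B.1
  symm := ⟨fun A B h => ⟨h.1.symm, h.2.symm⟩⟩
  loopless := ⟨fun A h => h.1 rfl⟩

/-- The generalized Kneser graph `KG(m,n,s)`. -/
def genKneser (m n s : ℕ) : SimpleGraph {A : Finset (Fin m) // A.card = n} where
  Adj A B := A ≠ B ∧ (A.1 ∩ B.1).card ≤ s
  symm := ⟨fun A B h => ⟨h.1.symm, by rw [Finset.inter_comm]; exact h.2⟩⟩
  loopless := ⟨fun A h => h.1 rfl⟩

/-- 2-stability of a subset of `[m]`. -/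
def TwoStable (m : ℕ) (A : Finset (Fin m)) : Prop :=
  ∀ x ∈ A, ∀ y ∈ A, x ≠ y →
    2 ≤ ((x : ℤ) - (y : ℤ)).natAbs ∧ ((x : ℤ) - (y : ℤ)).natAbs ≤ m - 2

/-- The Schrijver graph `SG(m,n)`. -/
def schrijver (m n : ℕ) :
    SimpleGraph {A : Finset (Fin m) // A.card = n ∧ TwoStable m A} where
  Adj A B := A ≠ B ∧ Disjoint A.1 B.1
  symm := ⟨fun A B h => ⟨h.1.symm, h.2.symm⟩⟩
  loopless := ⟨fun A h => h.1 rfl⟩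

/-!
Fix an edge `uv` and a proper colouring with `χ(G)` colours. An independent set `s` is free iff
`s ∪ {a}` and `s ∪ {b}` are independent for some edge `ab`; hence every colour class with
`N(u) ∪ N(v)` removed is free, witnessed by `uv`. Girth at least `5` makes `N(u)` independent,
and any edge `pz` with `p ∈ N(u)`, `z ≠ u` then witnesses that `N(u) \ {p}` is free. So
`N(u) ∪ N(v)` is covered by the four free sets `{u}`, `{v}`, `N(u) \ {v}`, `N(v) \ {u}`, or, when
`v` is a leaf, by `{u}`, `{p}`, `N(u) \ {p}` (by `{u}`, `N(u)` if the component of `u` is a star).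
-/

section FreeIndep

variable {G : SimpleGraph V} {s t M : Set V} {a u v : V}

theorem IsIndep.mono (h : IsIndep G t) (hst : s ⊆ t) : IsIndep G s :=
  fun _ hx _ hy => h (hst hx) (hst hy)

theorem isIndep_insert : IsIndep G (insert a s) ↔ IsIndep G s ∧ ∀ x ∈ s, ¬ G.Adj a x := by
  refine ⟨fun h => ⟨h.mono (Set.subset_insert a s),
    fun x hx => h (Set.mem_insert a s) (Set.mem_insert_of_mem a hx)⟩, ?_⟩
  rintro ⟨hs, ha⟩ x hx y hy hxy
  rcases hx with rfl | hx <;> rcases hy with rfl | hy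
  · exact hxy.ne rfl
  · exact ha y hy hxy
  · exact ha x hx hxy.symm
  · exact hs hx hy hxy

theorem IsFreeIndep.mono (h : IsFreeIndep G t) (hst : s ⊆ t) : IsFreeIndep G s :=
  let ⟨ht, M₁, M₂, hM₁, hM₂, hne, ht₁, ht₂⟩ := h
  ⟨ht.mono hst, M₁, M₂, hM₁, hM₂, hne, hst.trans ht₁, hst.trans ht₂⟩

theorem IsIndep.exists_isMaxIndep_superset (hs : IsIndep G s) :
    ∃ M, IsMaxIndep G M ∧ s ⊆ M := by
  obtain ⟨M, hsM, hM, hmax⟩ := zorn_subset_nonempty {t : Set V | IsIndep G t}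
    (fun c hc hchain _ => ⟨⋃₀ c, fun x ⟨t₁, ht₁, hx⟩ y ⟨t₂, ht₂, hy⟩ hxy =>
      (hchain.total ht₁ ht₂).elim (fun h => hc ht₂ (h hx) hy hxy)
        (fun h => hc ht₁ hx (h hy) hxy),
      fun _ => Set.subset_sUnion_of_mem⟩) s hs
  exact ⟨M, ⟨hM, fun t ht hMt => hMt.antisymm (hmax ht hMt)⟩, hsM⟩

theorem IsMaxIndep.exists_adj_of_notMem (hM : IsMaxIndep G M) (ha : a ∉ M) :
    ∃ b ∈ M, G.Adj a b := by
  by_contra! h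
  exact ha (hM.2 _ (isIndep_insert.2 ⟨hM.1, h⟩) (Set.subset_insert a M) ▸ Set.mem_insert a M)

theorem isFreeIndep_iff_exists_adj :
    IsFreeIndep G s ↔ ∃ a b, G.Adj a b ∧ IsIndep G (insert a s) ∧ IsIndep G (insert b s) := by
  constructor
  · rintro ⟨-, M₁, M₂, hM₁, hM₂, hne, hs₁, hs₂⟩
    obtain ⟨a, ha₁, ha₂⟩ := Set.not_subset.1 fun h => hne (hM₁.2 M₂ hM₂.1 h)
    obtain ⟨b, hb₂, hab⟩ := hM₂.exists_adj_of_notMem ha₂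
    exact ⟨a, b, hab, hM₁.1.mono (Set.insert_subset ha₁ hs₁),
      hM₂.1.mono (Set.insert_subset hb₂ hs₂)⟩
  · rintro ⟨a, b, hab, ha, hb⟩
    obtain ⟨M₁, hM₁, ha₁⟩ := ha.exists_isMaxIndep_superset
    obtain ⟨M₂, hM₂, hb₂⟩ := hb.exists_isMaxIndep_superset
    refine ⟨ha.mono (Set.subset_insert a s), M₁, M₂, hM₁, hM₂, ?_,
      (Set.subset_insert a s).trans ha₁, (Set.subset_insert b s).trans hb₂⟩
    rintro rfl
    exact hM₁.1 (ha₁ (Set.mem_insert a s)) (hb₂ (Set.mem_insert b s)) hab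

theorem IsFreeIndep.exists_adj (h : IsFreeIndep G s) : ∃ a b, G.Adj a b :=
  let ⟨a, b, hab, _⟩ := isFreeIndep_iff_exists_adj.1 h
  ⟨a, b, hab⟩

theorem IsIndep.isFreeIndep_of_adj (hs : IsIndep G s) (huv : G.Adj u v)
    (hu : ∀ x ∈ s, ¬ G.Adj u x) (hv : ∀ x ∈ s, ¬ G.Adj v x) : IsFreeIndep G s :=
  isFreeIndep_iff_exists_adj.2 ⟨u, v, huv, isIndep_insert.2 ⟨hs, hu⟩, isIndep_insert.2 ⟨hs, hv⟩⟩

theorem IsFreeGraph.isFreeIndep_singleton (hG : IsFreeGraph G) (w : V) : IsFreeIndep G {w} :=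
  let ⟨_, hF, hw⟩ := hG w
  hF.mono (Set.singleton_subset_iff.2 hw)

theorem freePartition_of_forall_exists_mem {n : ℕ} (Q : Fin n → Set V)
    (hQ : ∀ i, IsFreeIndep G (Q i)) (hcover : ∀ x, ∃ i, x ∈ Q i) : FreePartition G n := by
  choose f hf using hcover
  exact ⟨fun i => {x | f x = i}, fun i => (hQ i).mono fun x (hx : f x = i) => hx ▸ hf x,
    fun x => ⟨f x, rfl, fun _ h => h.symm⟩⟩

end FreeIndep

section Girth

variable {G : SimpleGraph V} {a b c d : V}

theorem not_adj_closing_triangle (hg : 5 ≤ G.girth) (hab : G.Adj a b) (hbc : G.Adj b c) :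
    ¬ G.Adj c a := by
  intro hca
  have hw : (Walk.cons hab (Walk.cons hbc (Walk.cons hca Walk.nil))).IsCycle := by
    simp [Walk.isCycle_def, Walk.isTrail_def, hab.ne, hbc.ne, hca.ne, hab.ne', hca.ne']
  have := hg.trans (G.girth_le_length hw)
  simp at this

theorem not_adj_closing_square (hg : 5 ≤ G.girth) (hab : G.Adj a b) (hbc : G.Adj b c)
    (hcd : G.Adj c d) (hac : a ≠ c) (hbd : b ≠ d) : ¬ G.Adj d a := by
  intro hda
  have hw : (Walk.cons hab (Walk.cons hbc (Walk.cons hcd (Walk.cons hda Walk.nil)))).IsCycle := by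
    simp [Walk.isCycle_def, Walk.isTrail_def, hab.ne, hbc.ne, hcd.ne, hda.ne, hab.ne', hda.ne',
      hac, hbd, hac.symm]
  have := hg.trans (G.girth_le_length hw)
  simp at this

theorem isIndep_neighborSet (hg : 5 ≤ G.girth) (u : V) : IsIndep G (G.neighborSet u) :=
  fun _ hx _ hy hxy => not_adj_closing_triangle hg hx hxy hy.symm

theorem isFreeIndep_neighborSet_diff_singleton (hg : 5 ≤ G.girth) {u p z : V}
    (hup : G.Adj u p) (hpz : G.Adj p z) (hzu : z ≠ u) :
    IsFreeIndep G (G.neighborSet u \ {p}) := by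
  have hN := isIndep_neighborSet hg u
  refine isFreeIndep_iff_exists_adj.2
    ⟨p, z, hpz, ?_, isIndep_insert.2 ⟨hN.mono Set.sdiff_subset, ?_⟩⟩
  · rwa [Set.insert_sdiff_singleton, Set.insert_eq_of_mem (show p ∈ G.neighborSet u from hup)]
  · rintro y ⟨huy, hyp⟩ hzy
    exact not_adj_closing_square hg hup hpz hzy hzu.symm (fun h => hyp h.symm) huy.symm

end Girth

section Cover

variable {G : SimpleGraph V}

theorem IsFreeGraph.isFreeIndep_neighborSet (hG : IsFreeGraph G) {u : V}
    (hleaf : ∀ p ∈ G.neighborSet u, ∀ z, G.Adj p z → z = u) :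
    IsFreeIndep G (G.neighborSet u) := by
  have hN : IsIndep G (G.neighborSet u) := fun x _ y hy hxy =>
    G.loopless.irrefl u (hleaf x ‹_› y hxy ▸ hy)
  obtain ⟨a, b, hab, ha, hb⟩ := isFreeIndep_iff_exists_adj.1 (hG.isFreeIndep_singleton u)
  have hau : a ≠ u := by
    rintro rfl
    exact hb (Set.mem_insert_of_mem _ rfl) (Set.mem_insert _ _) hab
  have hbu : b ≠ u := by
    rintro rfl
    exact ha (Set.mem_insert _ _) (Set.mem_insert_of_mem _ rfl) hab
  exact isFreeIndep_iff_exists_adj.2 ⟨a, b, hab,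
    isIndep_insert.2 ⟨hN, fun x hx hax => hau (hleaf x hx a hax.symm)⟩,
    isIndep_insert.2 ⟨hN, fun x hx hbx => hbu (hleaf x hx b hbx.symm)⟩⟩

theorem IsFreeGraph.exists_cover_insert_neighborSet (hG : IsFreeGraph G) (hg : 5 ≤ G.girth)
    (u : V) : ∃ A B C, IsFreeIndep G A ∧ IsFreeIndep G B ∧ IsFreeIndep G C ∧
      insert u (G.neighborSet u) ⊆ A ∪ B ∪ C := by
  by_cases h : ∃ p ∈ G.neighborSet u, ∃ z, G.Adj p z ∧ z ≠ u
  · obtain ⟨p, hup, z, hpz, hzu⟩ := h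
    refine ⟨{u}, {p}, G.neighborSet u \ {p}, hG.isFreeIndep_singleton u,
      hG.isFreeIndep_singleton p, isFreeIndep_neighborSet_diff_singleton hg hup hpz hzu, ?_⟩
    intro x hx
    by_cases hxp : x = p <;> simp_all
  · push Not at h
    refine ⟨{u}, G.neighborSet u, {u}, hG.isFreeIndep_singleton u, hG.isFreeIndep_neighborSet h,
      hG.isFreeIndep_singleton u, ?_⟩
    intro x hx
    simp_all

theorem IsFreeGraph.exists_cover_neighborSet_union (hG : IsFreeGraph G) (hg : 5 ≤ G.girth)
    {u v : V} (huv : G.Adj u v) : ∃ A B C D, IsFreeIndep G A ∧ IsFreeIndep G B ∧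
      IsFreeIndep G C ∧ IsFreeIndep G D ∧ G.neighborSet u ∪ G.neighborSet v ⊆ A ∪ B ∪ C ∪ D := by
  by_cases hdeg : (∃ p, G.Adj u p ∧ p ≠ v) ∧ ∃ q, G.Adj v q ∧ q ≠ u
  · obtain ⟨⟨p, hup, hpv⟩, q, hvq, hqu⟩ := hdeg
    refine ⟨{u}, {v}, G.neighborSet u \ {v}, G.neighborSet v \ {u}, hG.isFreeIndep_singleton u,
      hG.isFreeIndep_singleton v, isFreeIndep_neighborSet_diff_singleton hg huv hvq hqu,
      isFreeIndep_neighborSet_diff_singleton hg huv.symm hup hpv, ?_⟩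
    intro x hx
    by_cases hxu : x = u <;> by_cases hxv : x = v <;> simp_all
  · have hclosed : ∃ w, G.neighborSet u ∪ G.neighborSet v ⊆ insert w (G.neighborSet w) := by
      rcases not_and_or.1 hdeg with hu | hv
      · push Not at hu
        exact ⟨v, fun x hx => hx.elim (fun hux => Or.inl (hu x hux)) Or.inr⟩
      · push Not at hv
        exact ⟨u, fun x hx => hx.elim Or.inr (fun hvx => Or.inl (hv x hvx))⟩
    obtain ⟨w, hw⟩ := hclosed
    obtain ⟨A, B, C, hA, hB, hC, hcov⟩ := hG.exists_cover_insert_neighborSet hg w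
    exact ⟨A, B, C, A, hA, hB, hC, hA, hw.trans (hcov.trans Set.subset_union_left)⟩

end Cover

theorem colorable_chromNum [Fintype V] (G : SimpleGraph V) : G.Colorable (chromNum G) :=
  Nat.sInf_mem (s := {k | G.Colorable k}) ⟨_, G.colorable_of_fintype⟩

theorem freePartition_add_four {G : SimpleGraph V} {k : ℕ} (col : G.Coloring (Fin k)) {u v : V}
    (huv : G.Adj u v) {A B C D : Set V} (hA : IsFreeIndep G A) (hB : IsFreeIndep G B)
    (hC : IsFreeIndep G C) (hD : IsFreeIndep G D)
    (hcov : G.neighborSet u ∪ G.neighborSet v ⊆ A ∪ B ∪ C ∪ D) : FreePartition G (k + 4) := by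
  set K := G.neighborSet u ∪ G.neighborSet v
  refine freePartition_of_forall_exists_mem
    (Fin.append (fun c => {x | x ∉ K ∧ col x = c}) ![A, B, C, D]) ?_ fun x => ?_
  · refine (Fin.forall_fin_add _).2 ⟨fun c => ?_, fun j => ?_⟩
    · rw [Fin.append_left]
      exact IsIndep.isFreeIndep_of_adj (fun x hx y hy hxy => col.valid hxy (hx.2.trans hy.2.symm))
        huv (fun x hx hux => hx.1 (Or.inl hux)) (fun x hx hvx => hx.1 (Or.inr hvx))
    · rw [Fin.append_right]
      fin_cases j <;> assumption
  · by_cases hx : x ∈ K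
    · rcases hcov hx with ((hx | hx) | hx) | hx
      exacts [⟨Fin.natAdd k 0, by simpa⟩, ⟨Fin.natAdd k 1, by simpa⟩,
        ⟨Fin.natAdd k 2, by simpa⟩, ⟨Fin.natAdd k 3, by simpa⟩]
    · exact ⟨Fin.castAdd 4 (col x), by simp [hx]⟩

/-- if `G` is a free graph with girth at least `5`, then `φ(G) ≤ χ(G) + 4`. -/
theorem stmt6 {V : Type*} [Fintype V] (G : SimpleGraph V) (hfree : IsFreeGraph G)
    (hg : 5 ≤ G.girth) :
    freeChrom G ≤ ((chromNum G + 4 : ℕ) : ℕ∞) := by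
  rcases isEmpty_or_nonempty V with hV | ⟨⟨w⟩⟩
  · have h0 : FreePartition G 0 :=
      freePartition_of_forall_exists_mem Fin.elim0 (fun i => i.elim0) isEmptyElim
    exact (show freeChrom G ≤ (0 : ℕ) from sInf_le ⟨0, rfl, h0⟩).trans (by simp)
  · obtain ⟨u, v, huv⟩ := (hfree.isFreeIndep_singleton w).exists_adj
    obtain ⟨A, B, C, D, hA, hB, hC, hD, hcov⟩ := hfree.exists_cover_neighborSet_union hg huv
    obtain ⟨col⟩ := colorable_chromNum G
    exact sInf_le ⟨_, rfl, freePartition_add_four col huv hA hB hC hD hcov⟩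
end

section
/- If G is a finite free graph with girth at least 7, then φ(G) ≤ χ(G) + 2. -/
open SimpleGraph

variable {V : Type*} {W : Type*}

/-! Say that `v` has a *far edge* if some edge has both ends at distance at least 3 from `v`.
If `a b` is an edge whose ends both have far edges and `G` is `k`-colourable, then `N(a)`,
`N(b) \ N(a)` and the `k` colour classes minus `N(a) ∪ N(b)` partition `V`, and each part `S`
is free: for an edge `p q` (a far edge of `a`, a far edge of `b`, or `a b` itself) both
`S ∪ {p}` and `S ∪ {q}` are independent, hence lie in two different maximal independent sets.

Freeness of `G` gives every vertex `v` an edge outside its closed neighbourhood. If `v` has no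
far edge, applying this to `v` and to a neighbour `a` of `v` yields a walk `y b v a x c` without
backtracking, with `c` at distance 3 from `v`; since the girth is at least 7, both `x` and `c`
have far edges (`b y` and `v b` respectively). -/

section FreeChromatic

variable {G : SimpleGraph V}

lemma egirth_le_of_le_girth {n : ℕ} (h : n ≤ G.girth) : (n : ℕ∞) ≤ G.egirth := by
  by_cases htop : G.egirth = ⊤
  · simp [htop]
  · rw [← ENat.natCast_toNat htop]
    exact_mod_cast h

lemma false_of_cycle3 (hg : 4 ≤ G.egirth) {a b c : V} (h1 : G.Adj a b) (h2 : G.Adj b c)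
    (h3 : G.Adj c a) : False := by
  have hc : (Walk.cons h1 (Walk.cons h2 (Walk.cons h3 Walk.nil))).IsCycle := by
    simp_all [Walk.isCycle_def, Walk.isTrail_def, h1.ne, h2.ne, h3.ne, h1.ne', h3.ne']
  have := hg.trans (egirth_le_length hc)
  norm_num at this

lemma false_of_cycle4 (hg : 5 ≤ G.egirth) {a b c d : V} (h1 : G.Adj a b) (h2 : G.Adj b c)
    (h3 : G.Adj c d) (h4 : G.Adj d a) (hac : a ≠ c) (hbd : b ≠ d) : False := by
  have hc : (Walk.cons h1 (Walk.cons h2 (Walk.cons h3 (Walk.cons h4 Walk.nil)))).IsCycle := by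
    simp_all [Walk.isCycle_def, Walk.isTrail_def, h1.ne, h2.ne, h3.ne, h4.ne,
      h1.ne', h4.ne', Ne.symm]
  have := hg.trans (egirth_le_length hc)
  norm_num at this

lemma false_of_cycle5 (hg : 6 ≤ G.egirth) {a b c d e : V} (h1 : G.Adj a b) (h2 : G.Adj b c)
    (h3 : G.Adj c d) (h4 : G.Adj d e) (h5 : G.Adj e a)
    (hac : a ≠ c) (had : a ≠ d) (hbd : b ≠ d) (hbe : b ≠ e) (hce : c ≠ e) : False := by
  have hc : (Walk.cons h1 (Walk.cons h2 (Walk.cons h3 (Walk.cons h4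
      (Walk.cons h5 Walk.nil))))).IsCycle := by
    simp_all [Walk.isCycle_def, Walk.isTrail_def, h1.ne, h2.ne, h3.ne, h4.ne, h5.ne,
      h1.ne', h5.ne', Ne.symm]
  have := hg.trans (egirth_le_length hc)
  norm_num at this

lemma false_of_cycle6 (hg : 7 ≤ G.egirth) {a b c d e f : V} (h1 : G.Adj a b) (h2 : G.Adj b c)
    (h3 : G.Adj c d) (h4 : G.Adj d e) (h5 : G.Adj e f) (h6 : G.Adj f a)
    (hac : a ≠ c) (had : a ≠ d) (hae : a ≠ e) (hbd : b ≠ d) (hbe : b ≠ e) (hbf : b ≠ f)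
    (hce : c ≠ e) (hcf : c ≠ f) (hdf : d ≠ f) : False := by
  have hc : (Walk.cons h1 (Walk.cons h2 (Walk.cons h3 (Walk.cons h4 (Walk.cons h5
      (Walk.cons h6 Walk.nil)))))).IsCycle := by
    simp_all [Walk.isCycle_def, Walk.isTrail_def, h1.ne, h2.ne, h3.ne, h4.ne, h5.ne, h6.ne,
      h1.ne', h6.ne', Ne.symm]
  have := hg.trans (egirth_le_length hc)
  norm_num at this

lemma isIndep_insert_s7 {u : V} {S : Set V} :
    IsIndep G (insert u S) ↔ IsIndep G S ∧ ∀ w ∈ S, ¬ G.Adj u w := by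
  refine ⟨fun h => ⟨fun x hx y hy => h (Or.inr hx) (Or.inr hy),
    fun w hw => h (Set.mem_insert u S) (Or.inr hw)⟩, fun ⟨hS, hu⟩ => ?_⟩
  rintro x (rfl | hx) y (rfl | hy) hxy
  · exact G.loopless.irrefl _ hxy
  · exact hu y hy hxy
  · exact hu x hx hxy.symm
  · exact hS hx hy hxy

lemma IsIndep.subset {S T : Set V} (hS : IsIndep G S) (hT : T ⊆ S) : IsIndep G T :=
  fun _ hx _ hy => hS (hT hx) (hT hy)

lemma IsFreeIndep.subset {S T : Set V} (hS : IsFreeIndep G S) (hT : T ⊆ S) :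
    IsFreeIndep G T := by
  obtain ⟨hind, M₁, M₂, h₁, h₂, hne, hS₁, hS₂⟩ := hS
  exact ⟨hind.subset hT, M₁, M₂, h₁, h₂, hne, hT.trans hS₁, hT.trans hS₂⟩

lemma IsMaxIndep.exists_adj_of_notMem_s7 {M : Set V} (hM : IsMaxIndep G M) {u : V} (hu : u ∉ M) :
    ∃ z ∈ M, G.Adj u z := by
  by_contra! h
  exact hu ((hM.2 _ (isIndep_insert_s7.2 ⟨hM.1, h⟩) (Set.subset_insert u M)) ▸ Set.mem_insert u M)

lemma exists_isMaxIndep_superset [Finite V] {S : Set V} (hS : IsIndep G S) :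
    ∃ M, IsMaxIndep G M ∧ S ⊆ M := by
  obtain ⟨M, ⟨hM, hSM⟩, hmax⟩ := Set.Finite.exists_maximalFor id
    {t : Set V | IsIndep G t ∧ S ⊆ t} (Set.toFinite _) ⟨S, hS, subset_rfl⟩
  exact ⟨M, ⟨hM, fun t ht hMt => hMt.antisymm (hmax ⟨ht, hSM.trans hMt⟩ hMt)⟩, hSM⟩

lemma isFreeIndep_of_adj [Finite V] {S : Set V} {p q : V} (hp : IsIndep G (insert p S))
    (hq : IsIndep G (insert q S)) (hpq : G.Adj p q) : IsFreeIndep G S := by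
  obtain ⟨M₁, hM₁, hpM₁⟩ := exists_isMaxIndep_superset hp
  obtain ⟨M₂, hM₂, hqM₂⟩ := exists_isMaxIndep_superset hq
  refine ⟨hp.subset (Set.subset_insert p S), M₁, M₂, hM₁, hM₂, ?_,
    (Set.subset_insert p S).trans hpM₁, (Set.subset_insert q S).trans hqM₂⟩
  rintro rfl
  exact hM₁.1 (hpM₁ (Set.mem_insert p S)) (hqM₂ (Set.mem_insert q S)) hpq

lemma IsFreeGraph.exists_adj_not_adj (hfree : IsFreeGraph G) (v : V) :
    ∃ p q, G.Adj p q ∧ p ≠ v ∧ ¬ G.Adj v p ∧ q ≠ v ∧ ¬ G.Adj v q := by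
  obtain ⟨F, ⟨-, M₁, M₂, h₁, h₂, hne, hF₁, hF₂⟩, hvF⟩ := hfree v
  wlog hM : ¬ M₁ ⊆ M₂ generalizing M₁ M₂
  · exact this M₂ M₁ h₂ h₁ hne.symm hF₂ hF₁ fun h => hne ((not_not.1 hM).antisymm h)
  obtain ⟨u, hu₁, hu₂⟩ := Set.not_subset.1 hM
  obtain ⟨z, hz₂, huz⟩ := h₂.exists_adj_of_notMem_s7 hu₂
  refine ⟨u, z, huz, ?_, fun h => h₁.1 (hF₁ hvF) hu₁ h, ?_, fun h => h₂.1 (hF₂ hvF) hz₂ h⟩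
  · rintro rfl; exact hu₂ (hF₂ hvF)
  · rintro rfl; exact h₁.1 (hF₁ hvF) hu₁ huz.symm

lemma freeChrom_le {n : ℕ} (h : FreePartition G n) : freeChrom G ≤ n :=
  sInf_le ⟨n, rfl, h⟩

lemma freePartition_of_fibers {t : ℕ} (f : V → Fin t) (hf : ∀ i, IsFreeIndep G (f ⁻¹' {i})) :
    FreePartition G t :=
  ⟨fun i => f ⁻¹' {i}, hf, fun v => ⟨f v, rfl, fun _ hi => hi.symm⟩⟩

lemma isFreeIndep_sdiff_neighborSet_union [Finite V] {S : Set V} (hS : IsIndep G S) {a b : V}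
    (hab : G.Adj a b) : IsFreeIndep G (S \ (G.neighborSet a ∪ G.neighborSet b)) :=
  isFreeIndep_of_adj
    (isIndep_insert_s7.2 ⟨hS.subset Set.sdiff_subset, fun _ hw haw => hw.2 (Or.inl haw)⟩)
    (isIndep_insert_s7.2 ⟨hS.subset Set.sdiff_subset, fun _ hw hbw => hw.2 (Or.inr hbw)⟩) hab

def WithinTwo (G : SimpleGraph V) (v x : V) : Prop :=
  x = v ∨ G.Adj v x ∨ ∃ z, G.Adj v z ∧ G.Adj z x

def HasFarEdge (G : SimpleGraph V) (v : V) : Prop :=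
  ∃ p q, G.Adj p q ∧ ¬ WithinTwo G v p ∧ ¬ WithinTwo G v q

lemma withinTwo_or_withinTwo_of_not_hasFarEdge {v p q : V} (hv : ¬ HasFarEdge G v)
    (hpq : G.Adj p q) : WithinTwo G v p ∨ WithinTwo G v q := by
  by_contra! h
  exact hv ⟨p, q, hpq, h.1, h.2⟩

lemma isFreeIndep_neighborSet [Finite V] (hg : 4 ≤ G.egirth) {a : V} (ha : HasFarEdge G a) :
    IsFreeIndep G (G.neighborSet a) := by
  obtain ⟨p, q, hpq, hp, hq⟩ := ha
  have hN : IsIndep G (G.neighborSet a) := fun _ hu _ hw huw => false_of_cycle3 hg hu huw hw.symm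
  exact isFreeIndep_of_adj
    (isIndep_insert_s7.2 ⟨hN, fun w hw hpw => hp (Or.inr (Or.inr ⟨w, hw, hpw.symm⟩))⟩)
    (isIndep_insert_s7.2 ⟨hN, fun w hw hqw => hq (Or.inr (Or.inr ⟨w, hw, hqw.symm⟩))⟩) hpq

lemma freePartition_add_two [Finite V] (hg : 4 ≤ G.egirth) {k : ℕ} (hk : G.Colorable k)
    {a b : V} (hab : G.Adj a b) (ha : HasFarEdge G a) (hb : HasFarEdge G b) :
    FreePartition G (k + 2) := by
  classical
  obtain ⟨C⟩ := hk
  let f : V → Fin (k + 2) := fun u =>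
    if G.Adj a u then Fin.last _ else if G.Adj b u then (Fin.last _).castSucc
    else (C u).castSucc.castSucc
  refine freePartition_of_fibers f fun i => ?_
  induction i using Fin.lastCases with
  | last =>
    refine (isFreeIndep_neighborSet hg ha).subset fun u hu => ?_
    simp only [Set.mem_preimage, Set.mem_singleton_iff, f] at hu
    split_ifs at hu with hau hbu
    exacts [hau, absurd hu (Fin.castSucc_ne_last _), absurd hu (Fin.castSucc_ne_last _)]
  | cast i =>
    induction i using Fin.lastCases with
    | last =>
      refine (isFreeIndep_neighborSet hg hb).subset fun u hu => ?_
      simp only [Set.mem_preimage, Set.mem_singleton_iff, f] at hu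
      split_ifs at hu with hau hbu
      exacts [absurd hu.symm (Fin.castSucc_ne_last _), hbu,
        absurd (Fin.castSucc_injective _ hu) (Fin.castSucc_ne_last _)]
    | cast j =>
      refine (isFreeIndep_sdiff_neighborSet_union (S := C.colorClass j)
        (fun u hu w hw huw => C.valid huw (hu.trans hw.symm)) hab).subset fun u hu => ?_
      simp only [Set.mem_preimage, Set.mem_singleton_iff, f] at hu
      split_ifs at hu with hau hbu
      · exact absurd hu.symm (Fin.castSucc_ne_last _)
      · exact absurd (Fin.castSucc_injective _ hu).symm (Fin.castSucc_ne_last _)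
      · exact ⟨Fin.castSucc_injective _ (Fin.castSucc_injective _ hu), fun h => h.elim hau hbu⟩

lemma exists_far_path (hg : 6 ≤ G.egirth) {v p q : V} (hv : ¬ HasFarEdge G v)
    (hpq : G.Adj p q) (hp : p ≠ v) (hvp : ¬ G.Adj v p) (hq : q ≠ v) (hvq : ¬ G.Adj v q) :
    ∃ a x c, G.Adj v a ∧ G.Adj a x ∧ G.Adj x c ∧ ¬ WithinTwo G v c := by
  wlog hwp : WithinTwo G v p generalizing p q
  · exact this hpq.symm hq hvq hp hvp
      ((withinTwo_or_withinTwo_of_not_hasFarEdge hv hpq).resolve_left hwp)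
  obtain ⟨a, hva, hap⟩ : ∃ a, G.Adj v a ∧ G.Adj a p := by
    rcases hwp with rfl | h | h
    exacts [absurd rfl hp, absurd h hvp, h]
  refine ⟨a, p, q, hva, hap, hpq, ?_⟩
  rintro (rfl | hvq' | ⟨z, hvz, hzq⟩)
  · exact hq rfl
  · exact hvq hvq'
  by_cases hza : z = a
  · subst hza
    exact false_of_cycle3 (hg.trans' (by norm_num)) hap hpq hzq.symm
  refine false_of_cycle5 hg hva hap hpq hzq.symm hvz.symm hp.symm hq.symm ?_ (Ne.symm hza) ?_
  · rintro rfl; exact hvq hva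
  · rintro rfl; exact hvp hvz

lemma exists_adj_adj_ne {v a s t : V} (hv : ¬ HasFarEdge G v)
    (hva : G.Adj v a) (hst : G.Adj s t) (hs : s ≠ a) (has : ¬ G.Adj a s) (ht : t ≠ a)
    (hat : ¬ G.Adj a t) : ∃ b y, G.Adj v b ∧ G.Adj b y ∧ b ≠ a ∧ y ≠ v := by
  wlog hws : WithinTwo G v s generalizing s t
  · exact this hst.symm ht hat hs has
      ((withinTwo_or_withinTwo_of_not_hasFarEdge hv hst).resolve_left hws)
  rcases hws with rfl | hvs | ⟨b, hvb, hbs⟩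
  · exact absurd hva.symm has
  · refine ⟨s, t, hvs, hst, hs, ?_⟩
    rintro rfl; exact hat hva.symm
  · refine ⟨b, s, hvb, hbs, ?_, ?_⟩
    · rintro rfl; exact has hbs
    · rintro rfl; exact has hva.symm

lemma hasFarEdge_of_path (hg : 7 ≤ G.egirth) {x₀ x₁ x₂ x₃ x₄ : V} (h₀₁ : G.Adj x₀ x₁)
    (h₁₂ : G.Adj x₁ x₂) (h₂₃ : G.Adj x₂ x₃) (h₃₄ : G.Adj x₃ x₄) (h₀₂ : x₀ ≠ x₂) (h₁₃ : x₁ ≠ x₃)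
    (h₂₄ : x₂ ≠ x₄) : HasFarEdge G x₀ := by
  have hg4 : 4 ≤ G.egirth := hg.trans' (by norm_num)
  have hg5 : 5 ≤ G.egirth := hg.trans' (by norm_num)
  have hg6 : 6 ≤ G.egirth := hg.trans' (by norm_num)
  have n₀₂ : ¬ G.Adj x₀ x₂ := fun h => false_of_cycle3 hg4 h₀₁ h₁₂ h.symm
  have n₁₃ : ¬ G.Adj x₁ x₃ := fun h => false_of_cycle3 hg4 h₁₂ h₂₃ h.symm
  have n₂₄ : ¬ G.Adj x₂ x₄ := fun h => false_of_cycle3 hg4 h₂₃ h₃₄ h.symm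
  have h₀₃ : x₀ ≠ x₃ := by rintro rfl; exact n₀₂ h₂₃.symm
  have h₁₄ : x₁ ≠ x₄ := by rintro rfl; exact n₁₃ h₃₄.symm
  have n₀₃ : ¬ G.Adj x₀ x₃ := fun h => false_of_cycle4 hg5 h₀₁ h₁₂ h₂₃ h.symm h₀₂ h₁₃
  have n₁₄ : ¬ G.Adj x₁ x₄ := fun h => false_of_cycle4 hg5 h₁₂ h₂₃ h₃₄ h.symm h₁₃ h₂₄
  have h₀₄ : x₀ ≠ x₄ := by rintro rfl; exact n₀₃ h₃₄.symm
  refine ⟨x₃, x₄, h₃₄, ?_, ?_⟩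
  · rintro (h | h | ⟨z, h₀z, hz₃⟩)
    · exact h₀₃ h.symm
    · exact n₀₃ h
    refine false_of_cycle5 hg6 h₀₁ h₁₂ h₂₃ hz₃.symm h₀z.symm h₀₂ h₀₃ h₁₃ ?_ ?_
    · rintro rfl; exact n₁₃ hz₃
    · rintro rfl; exact n₀₂ h₀z
  · rintro (h | h | ⟨z, h₀z, hz₄⟩)
    · exact h₀₄ h.symm
    · exact false_of_cycle5 hg6 h₀₁ h₁₂ h₂₃ h₃₄ h.symm h₀₂ h₀₃ h₁₃ h₁₄ h₂₄
    refine false_of_cycle6 hg h₀₁ h₁₂ h₂₃ h₃₄ hz₄.symm h₀z.symm h₀₂ h₀₃ h₀₄ h₁₃ h₁₄ ?_ h₂₄ ?_ ?_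
    · rintro rfl; exact n₁₄ hz₄
    · rintro rfl; exact n₀₂ h₀z
    · rintro rfl; exact n₀₃ h₀z

lemma exists_adj_hasFarEdge_of_not_hasFarEdge (hg : 7 ≤ G.egirth)
    (hnbhd : ∀ v, ∃ p q, G.Adj p q ∧ p ≠ v ∧ ¬ G.Adj v p ∧ q ≠ v ∧ ¬ G.Adj v q) {v : V}
    (hv : ¬ HasFarEdge G v) : ∃ x c, G.Adj x c ∧ HasFarEdge G x ∧ HasFarEdge G c := by
  obtain ⟨p, q, hpq, hp, hvp, hq, hvq⟩ := hnbhd v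
  obtain ⟨a, x, c, hva, hax, hxc, hc⟩ :=
    exists_far_path (hg.trans' (by norm_num)) hv hpq hp hvp hq hvq
  obtain ⟨s, t, hst, hs, has, ht, hat⟩ := hnbhd a
  obtain ⟨b, y, hvb, hby, hba, hyv⟩ := exists_adj_adj_ne hv hva hst hs has ht hat
  have hxv : x ≠ v := by rintro rfl; exact hc (Or.inr (Or.inl hxc))
  have hca : c ≠ a := by rintro rfl; exact hc (Or.inr (Or.inl hva))
  exact ⟨x, c, hxc, hasFarEdge_of_path hg hax.symm hva.symm hvb hby hxv hba.symm hyv.symm,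
    hasFarEdge_of_path hg hxc.symm hax.symm hva.symm hvb hca hxv hba.symm⟩

lemma exists_adj_hasFarEdge [Nonempty V] (hg : 7 ≤ G.egirth)
    (hnbhd : ∀ v, ∃ p q, G.Adj p q ∧ p ≠ v ∧ ¬ G.Adj v p ∧ q ≠ v ∧ ¬ G.Adj v q) :
    ∃ a b, G.Adj a b ∧ HasFarEdge G a ∧ HasFarEdge G b := by
  obtain ⟨p, q, hpq, -⟩ := hnbhd (Classical.arbitrary V)
  by_cases hp : HasFarEdge G p
  · by_cases hq : HasFarEdge G q
    · exact ⟨p, q, hpq, hp, hq⟩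
    · exact exists_adj_hasFarEdge_of_not_hasFarEdge hg hnbhd hq
  · exact exists_adj_hasFarEdge_of_not_hasFarEdge hg hnbhd hp

lemma freePartition_zero [IsEmpty V] : FreePartition G 0 :=
  ⟨Fin.elim0, fun i => i.elim0, isEmptyElim⟩

end FreeChromatic

/-- if `G` is a free graph with girth at least `7`, then `φ(G) ≤ χ(G) + 2`. -/
theorem stmt7 {V : Type*} [Fintype V] (G : SimpleGraph V) (hfree : IsFreeGraph G)
    (hg : 7 ≤ G.girth) :
    freeChrom G ≤ ((chromNum G + 2 : ℕ) : ℕ∞) := by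
  rcases isEmpty_or_nonempty V with hV | hV
  · exact (freeChrom_le freePartition_zero).trans zero_le
  have hg' : 7 ≤ G.egirth := egirth_le_of_le_girth hg
  obtain ⟨a, b, hab, ha, hb⟩ := exists_adj_hasFarEdge hg' hfree.exists_adj_not_adj
  have hk : G.Colorable (chromNum G) :=
    Nat.sInf_mem (s := {k | G.Colorable k}) ⟨_, G.colorable_of_fintype⟩
  exact freeChrom_le (freePartition_add_two (hg'.trans' (by norm_num)) hk hab ha hb)
end

section
/- Let m > 2n be positive integers and a ≥ 0, b ≥ 1 integers. Then φ^a_b(KG(m,n)) ≥ (C(m,n) − a·C(m−1,n−1)) / (C(m−1,n−1) − C(m−n−1,n−1)). -/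
open SimpleGraph

variable {V : Type*} {W : Type*}

/-!
A colour class of an `(a, b)`-free colouring of `KG(m, n)` is an intersecting family of `n`-sets,
so by Erdős–Ko–Rado it has at most `C(m-1, n-1)` members. A class `P` supported by an edge `uv`
consists of sets meeting both `u` and `v`, and adding `v` keeps it intersecting. If the enlarged
family has no common point, the Hilton–Milner theorem bounds its size by
`C(m-1, n-1) - C(m-n-1, n-1) + 1`; otherwise every member of `P` contains a fixed point of `v`
and meets `u`, and direct counting applies. Either way `|P| ≤ C(m-1, n-1) - C(m-n-1, n-1)`, and
summing over the `t` classes gives `C(m, n) + (t - a) C(m-n-1, n-1) ≤ t C(m-1, n-1)`.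

Hilton–Milner is proved by shifting. A shifted family with a member avoiding `0` contains
`{1, ..., k}`, so all its members meet `{1, ..., k}`. Splitting off the largest point into
deletion and link (both again shifted and intersecting, the link by a spare-point argument),
induction on the ground set reduces the claim to a bound for shifted intersecting families
meeting `{1, ..., c}` with `c > k`, whose own induction bottoms out at Erdős–Ko–Rado. A shift may
create a common point; then every member contains one of the two shifted points, and the members
containing exactly one of them form a pair of cross-intersecting families, handled by the
cross-intersecting version of Hilton–Milner.
-/

/-- Pascal's rule with the successors given as equations, which callers discharge by `omega`. -/
theorem Nat.choose_succ_succ_of_eq {n k N K : ℕ} (hN : N = n + 1) (hK : K = k + 1) :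
    N.choose K = n.choose k + n.choose K := by
  subst hN hK
  exact Nat.choose_succ_succ' n k

theorem Nat.choose_sub_lt_choose {m n : ℕ} (hn : 2 ≤ n) (hnm : n ≤ m) :
    (m - n - 1).choose (n - 1) < (m - 1).choose (n - 1) := by
  have p := Nat.choose_succ_succ_of_eq (n := m - 2) (k := n - 2) (N := m - 1) (K := n - 1)
    (by omega) (by omega)
  have := Nat.choose_pos (n := m - 2) (k := n - 2) (by omega)
  have := Nat.choose_le_choose (n - 1) (show m - n - 1 ≤ m - 2 by omega)
  omega

namespace SetFamily

open Finset

section Basic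

variable {α : Type*}

def CrossIntersecting (𝒜 ℬ : Finset (Finset α)) : Prop :=
  ∀ s ∈ 𝒜, ∀ t ∈ ℬ, ¬Disjoint s t

theorem CrossIntersecting.symm {𝒜 ℬ : Finset (Finset α)} (h : CrossIntersecting 𝒜 ℬ) :
    CrossIntersecting ℬ 𝒜 :=
  fun s hs t ht hst => h t ht s hs hst.symm

theorem CrossIntersecting.mono {𝒜 ℬ 𝒜' ℬ' : Finset (Finset α)} (h : CrossIntersecting 𝒜 ℬ)
    (h𝒜 : 𝒜' ⊆ 𝒜) (hℬ : ℬ' ⊆ ℬ) : CrossIntersecting 𝒜' ℬ' :=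
  fun s hs t ht => h s (h𝒜 hs) t (hℬ ht)

theorem crossIntersecting_self_iff [DecidableEq α] {𝒜 : Finset (Finset α)} :
    CrossIntersecting 𝒜 𝒜 ↔ (𝒜 : Set (Finset α)).Intersecting :=
  ⟨fun h _ hs _ ht => h _ hs _ ht, fun h _ hs _ ht => h hs ht⟩

end Basic

def IsShifted (𝒜 : Finset (Finset ℕ)) : Prop :=
  ∀ ⦃i j : ℕ⦄, i < j → ∀ ⦃s⦄, s ∈ 𝒜 → j ∈ s → i ∉ s → insert i (s.erase j) ∈ 𝒜

def shiftSet (i j : ℕ) (𝒜 : Finset (Finset ℕ)) (s : Finset ℕ) : Finset ℕ :=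
  if j ∈ s ∧ i ∉ s ∧ insert i (s.erase j) ∉ 𝒜 then insert i (s.erase j) else s

def shift (i j : ℕ) (𝒜 : Finset (Finset ℕ)) : Finset (Finset ℕ) :=
  𝒜.image (shiftSet i j 𝒜)

def weight (𝒜 : Finset (Finset ℕ)) : ℕ :=
  ∑ s ∈ 𝒜, ∑ x ∈ s, x

section Shift

variable {i j : ℕ} {𝒜 ℬ : Finset (Finset ℕ)}

theorem eq_of_insert_erase_eq {s t : Finset ℕ} (hjs : j ∈ s) (his : i ∉ s) (hjt : j ∈ t)
    (hit : i ∉ t) (h : insert i (s.erase j) = insert i (t.erase j)) : s = t := by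
  have := congrArg (fun u => insert j (u.erase i)) h
  simpa only [erase_insert (fun h => his (mem_of_mem_erase h)),
    erase_insert (fun h => hit (mem_of_mem_erase h)), insert_erase hjs, insert_erase hjt] using this

theorem shiftSet_injOn (𝒜 : Finset (Finset ℕ)) : Set.InjOn (shiftSet i j 𝒜) 𝒜 := by
  intro s hs t ht hst
  unfold shiftSet at hst
  split_ifs at hst with h₁ h₂ h₂
  · exact eq_of_insert_erase_eq h₁.1 h₁.2.1 h₂.1 h₂.2.1 hst
  · exact absurd (hst ▸ ht) h₁.2.2
  · exact absurd (hst ▸ hs) h₂.2.2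
  · exact hst

theorem card_shift (i j : ℕ) (𝒜 : Finset (Finset ℕ)) : #(shift i j 𝒜) = #𝒜 :=
  card_image_of_injOn (shiftSet_injOn 𝒜)

theorem shift_subset_powersetCard {k M : ℕ} (hij : i < j) (h : 𝒜 ⊆ powersetCard k (range M)) :
    shift i j 𝒜 ⊆ powersetCard k (range M) := by
  intro s hs
  obtain ⟨s, hs𝒜, rfl⟩ := mem_image.1 hs
  obtain ⟨hsM, hsk⟩ := mem_powersetCard.1 (h hs𝒜)
  unfold shiftSet
  split_ifs with hmove
  · refine mem_powersetCard.2 ⟨insert_subset_iff.2 ⟨?_, (erase_subset _ _).trans hsM⟩, ?_⟩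
    · exact mem_range.2 (hij.trans (mem_range.1 (hsM hmove.1)))
    · rw [card_insert_of_notMem (fun h => hmove.2.1 (mem_of_mem_erase h)),
        card_erase_add_one hmove.1, hsk]
  · exact h hs𝒜

theorem shiftSet_subset_insert (s : Finset ℕ) : shiftSet i j 𝒜 s ⊆ insert i s := by
  unfold shiftSet
  split_ifs
  · exact insert_subset_insert _ (erase_subset _ _)
  · exact subset_insert _ _

/-- If `s` and `t` meet only in `j`, then either `i ∈ t` or the shifted copy of `t` lies in `ℬ`,
and `s` meets that copy outside `i` and `j`. -/
theorem CrossIntersecting.not_disjoint_shift_left (h : CrossIntersecting 𝒜 ℬ) {s t : Finset ℕ}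
    (hs : s ∈ 𝒜) (ht : t ∈ ℬ) (his : i ∉ s)
    (hstay : ¬(j ∈ t ∧ i ∉ t ∧ insert i (t.erase j) ∉ ℬ)) :
    ¬Disjoint (insert i (s.erase j)) t := by
  obtain ⟨x, hxs, hxt⟩ := not_disjoint_iff.1 (h s hs t ht)
  rw [not_disjoint_iff]
  by_cases hxj : x = j
  · subst hxj
    by_cases hit : i ∈ t
    · exact ⟨i, mem_insert_self _ _, hit⟩
    have hshifted : insert i (t.erase x) ∈ ℬ := by tauto
    obtain ⟨y, hys, hyt⟩ := not_disjoint_iff.1 (h s hs _ hshifted)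
    have hyi : y ≠ i := by rintro rfl; exact his hys
    obtain ⟨hyx, hyt⟩ := mem_erase.1 ((mem_insert.1 hyt).resolve_left hyi)
    exact ⟨y, mem_insert_of_mem (mem_erase.2 ⟨hyx, hys⟩), hyt⟩
  · exact ⟨x, mem_insert_of_mem (mem_erase.2 ⟨hxj, hxs⟩), hxt⟩

theorem CrossIntersecting.shift (h : CrossIntersecting 𝒜 ℬ) :
    CrossIntersecting (shift i j 𝒜) (shift i j ℬ) := by
  simp only [CrossIntersecting, SetFamily.shift, mem_image]
  rintro _ ⟨s, hs, rfl⟩ _ ⟨t, ht, rfl⟩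
  unfold shiftSet
  split_ifs with hsmove htmove htmove
  · exact not_disjoint_iff.2 ⟨i, mem_insert_self _ _, mem_insert_self _ _⟩
  · exact h.not_disjoint_shift_left hs ht hsmove.2.1 htmove
  · exact fun hd => h.symm.not_disjoint_shift_left ht hs htmove.2.1 hsmove hd.symm
  · exact h s hs t ht

theorem sum_insert_erase_lt (hij : i < j) {s : Finset ℕ} (hjs : j ∈ s) (his : i ∉ s) :
    ∑ x ∈ insert i (s.erase j), x < ∑ x ∈ s, x := by
  rw [sum_insert (fun h => his (mem_of_mem_erase h)), ← sum_erase_add _ _ hjs]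
  omega

theorem sum_shiftSet_le (hij : i < j) (s : Finset ℕ) :
    ∑ x ∈ shiftSet i j 𝒜 s, x ≤ ∑ x ∈ s, x := by
  unfold shiftSet
  split_ifs with hmove
  · exact (sum_insert_erase_lt hij hmove.1 hmove.2.1).le
  · exact le_rfl

theorem weight_shift (𝒜 : Finset (Finset ℕ)) :
    weight (shift i j 𝒜) = ∑ s ∈ 𝒜, ∑ x ∈ shiftSet i j 𝒜 s, x :=
  sum_image (shiftSet_injOn 𝒜)

theorem weight_shift_le (hij : i < j) (𝒜 : Finset (Finset ℕ)) :
    weight (shift i j 𝒜) ≤ weight 𝒜 := by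
  rw [weight_shift]
  exact sum_le_sum fun s _ => sum_shiftSet_le hij s

theorem exists_mem_of_shift_ne (h : shift i j 𝒜 ≠ 𝒜) :
    ∃ s ∈ 𝒜, j ∈ s ∧ i ∉ s ∧ insert i (s.erase j) ∉ 𝒜 := by
  by_contra! hfix
  refine h ((image_congr fun s hs => ?_).trans image_id)
  exact if_neg fun hmove => hmove.2.2 (hfix s hs hmove.1 hmove.2.1)

theorem weight_shift_lt (hij : i < j) (h : shift i j 𝒜 ≠ 𝒜) :
    weight (shift i j 𝒜) < weight 𝒜 := by
  obtain ⟨s, hs, hmove⟩ := exists_mem_of_shift_ne h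
  rw [weight_shift]
  refine sum_lt_sum (fun t _ => sum_shiftSet_le hij t) ⟨s, hs, ?_⟩
  rw [shiftSet, if_pos hmove]
  exact sum_insert_erase_lt hij hmove.1 hmove.2.1

theorem isShifted_of_forall_shift_eq (h : ∀ i j, i < j → shift i j 𝒜 = 𝒜) : IsShifted 𝒜 := by
  intro i j hij s hs hjs his
  by_contra hnew
  have hmem : shiftSet i j 𝒜 s ∈ shift i j 𝒜 := mem_image_of_mem _ hs
  rw [h i j hij, shiftSet, if_pos ⟨hjs, his, hnew⟩] at hmem
  exact hnew hmem

theorem exists_isShifted_crossIntersecting {a b M : ℕ} (h𝒜 : 𝒜 ⊆ powersetCard a (range M))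
    (hℬ : ℬ ⊆ powersetCard b (range M)) (h : CrossIntersecting 𝒜 ℬ) :
    ∃ 𝒜' ℬ' : Finset (Finset ℕ), #𝒜' = #𝒜 ∧ #ℬ' = #ℬ ∧ 𝒜' ⊆ powersetCard a (range M) ∧
      ℬ' ⊆ powersetCard b (range M) ∧ CrossIntersecting 𝒜' ℬ' ∧ IsShifted 𝒜' ∧ IsShifted ℬ' := by
  induction hw : weight 𝒜 + weight ℬ using Nat.strong_induction_on generalizing 𝒜 ℬ with
  | _ w ih =>
  by_cases hfix : ∀ i j, i < j → shift i j 𝒜 = 𝒜 ∧ shift i j ℬ = ℬ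
  · exact ⟨𝒜, ℬ, rfl, rfl, h𝒜, hℬ, h, isShifted_of_forall_shift_eq fun i j hij => (hfix i j hij).1,
      isShifted_of_forall_shift_eq fun i j hij => (hfix i j hij).2⟩
  push Not at hfix
  obtain ⟨i, j, hij, hmoved⟩ := hfix
  have hlt : weight (shift i j 𝒜) + weight (shift i j ℬ) < w := by
    have := weight_shift_le hij 𝒜
    have := weight_shift_le hij ℬ
    by_cases h𝒜moved : shift i j 𝒜 = 𝒜
    · have := weight_shift_lt hij (hmoved h𝒜moved)
      omega
    · have := weight_shift_lt hij h𝒜moved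
      omega
  obtain ⟨𝒜', ℬ', h𝒜', hℬ', hrest⟩ := ih _ hlt (shift_subset_powersetCard hij h𝒜)
    (shift_subset_powersetCard hij hℬ) h.shift rfl
  exact ⟨𝒜', ℬ', h𝒜'.trans (card_shift i j 𝒜), hℬ'.trans (card_shift i j ℬ), hrest⟩

end Shift

section Counting

variable {α : Type*} [DecidableEq α] {𝒜 : Finset (Finset α)} {X Y : Finset α} {k : ℕ}

theorem nonMemberSubfamily_subset_powersetCard_erase {a : α} (h : 𝒜 ⊆ powersetCard k X) :
    𝒜.nonMemberSubfamily a ⊆ powersetCard k (X.erase a) := by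
  intro s hs
  obtain ⟨hs𝒜, has⟩ := mem_nonMemberSubfamily.1 hs
  obtain ⟨hsX, hsk⟩ := mem_powersetCard.1 (h hs𝒜)
  exact mem_powersetCard.2 ⟨fun x hx => mem_erase.2 ⟨by rintro rfl; exact has hx, hsX hx⟩, hsk⟩

theorem memberSubfamily_subset_powersetCard_erase {a : α} (h : 𝒜 ⊆ powersetCard k X) :
    𝒜.memberSubfamily a ⊆ powersetCard (k - 1) (X.erase a) := by
  intro s hs
  obtain ⟨hs𝒜, has⟩ := mem_memberSubfamily.1 hs
  obtain ⟨hsX, hsk⟩ := mem_powersetCard.1 (h hs𝒜)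
  rw [card_insert_of_notMem has] at hsk
  refine mem_powersetCard.2 ⟨fun x hx => mem_erase.2 ⟨?_, hsX (mem_insert_of_mem hx)⟩, by omega⟩
  rintro rfl
  exact has hx

theorem card_add_choose_le_of_forall_not_disjoint (h𝒜 : 𝒜 ⊆ powersetCard k X)
    (hY : ∀ s ∈ 𝒜, ¬Disjoint s Y) : #𝒜 + (#X - #Y).choose k ≤ (#X).choose k := by
  have hdisj : Disjoint 𝒜 (powersetCard k (X \ Y)) := by
    refine disjoint_left.2 fun s hs hsXY => hY s hs ?_
    exact disjoint_of_subset_left (mem_powersetCard.1 hsXY).1 sdiff_disjoint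
  have hsub : 𝒜 ∪ powersetCard k (X \ Y) ⊆ powersetCard k X :=
    union_subset h𝒜 (powersetCard_mono sdiff_subset)
  have := card_le_card hsub
  rw [card_union_of_disjoint hdisj, card_powersetCard, card_powersetCard] at this
  calc #𝒜 + (#X - #Y).choose k ≤ #𝒜 + (#(X \ Y)).choose k := by
        gcongr
        exact le_card_sdiff Y X
    _ ≤ (#X).choose k := this

theorem card_add_choose_le_of_forall_mem {z : α} (hzX : z ∈ X) (hzY : z ∉ Y)
    (h𝒜 : 𝒜 ⊆ powersetCard k X) (hz : ∀ s ∈ 𝒜, z ∈ s) (hY : ∀ s ∈ 𝒜, ¬Disjoint s Y) :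
    #𝒜 + (#X - 1 - #Y).choose (k - 1) ≤ (#X - 1).choose (k - 1) := by
  have hcard : #(𝒜.memberSubfamily z) = #𝒜 := by
    have hnon : 𝒜.nonMemberSubfamily z = ∅ :=
      filter_eq_empty_iff.2 fun s hs => not_not.2 (hz s hs)
    simpa [hnon] using card_memberSubfamily_add_card_nonMemberSubfamily z 𝒜
  have hYz : ∀ s ∈ 𝒜.memberSubfamily z, ¬Disjoint s Y := by
    intro s hs hsY
    refine hY _ (mem_memberSubfamily.1 hs).1 (disjoint_insert_left.2 ⟨hzY, hsY⟩)
  have := card_add_choose_le_of_forall_not_disjoint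
    (memberSubfamily_subset_powersetCard_erase h𝒜) hYz
  rwa [hcard, card_erase_of_mem hzX] at this

end Counting

section Link

variable {𝒜 ℬ : Finset (Finset ℕ)} {M k : ℕ}

theorem nonMemberSubfamily_subset_powersetCard (h : 𝒜 ⊆ powersetCard k (range (M + 1))) :
    𝒜.nonMemberSubfamily M ⊆ powersetCard k (range M) := by
  simpa [range_add_one] using nonMemberSubfamily_subset_powersetCard_erase (a := M) h

theorem memberSubfamily_subset_powersetCard (h : 𝒜 ⊆ powersetCard k (range (M + 1))) :
    𝒜.memberSubfamily M ⊆ powersetCard (k - 1) (range M) := by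
  simpa [range_add_one] using memberSubfamily_subset_powersetCard_erase (a := M) h

theorem IsShifted.nonMemberSubfamily (hsh : IsShifted 𝒜) (h : 𝒜 ⊆ powersetCard k (range (M + 1))) :
    IsShifted (𝒜.nonMemberSubfamily M) := by
  intro i j hij s hs hjs his
  have hjM : j < M :=
    mem_range.1 ((mem_powersetCard.1 (nonMemberSubfamily_subset_powersetCard h hs)).1 hjs)
  obtain ⟨hs𝒜, hMs⟩ := mem_nonMemberSubfamily.1 hs
  refine mem_nonMemberSubfamily.2 ⟨hsh hij hs𝒜 hjs his, ?_⟩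
  rw [mem_insert, not_or]
  exact ⟨by omega, fun hM => hMs (mem_of_mem_erase hM)⟩

theorem IsShifted.memberSubfamily (hsh : IsShifted 𝒜) (h : 𝒜 ⊆ powersetCard k (range (M + 1))) :
    IsShifted (𝒜.memberSubfamily M) := by
  intro i j hij s hs hjs his
  have hjM : j < M :=
    mem_range.1 ((mem_powersetCard.1 (memberSubfamily_subset_powersetCard h hs)).1 hjs)
  obtain ⟨hs𝒜, hMs⟩ := mem_memberSubfamily.1 hs
  have hshifted := hsh hij hs𝒜 (mem_insert_of_mem hjs)
    (by rw [mem_insert, not_or]; exact ⟨by omega, his⟩)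
  rw [erase_insert_of_ne (by omega), insert_comm] at hshifted
  refine mem_memberSubfamily.2 ⟨hshifted, ?_⟩
  rw [mem_insert, not_or]
  exact ⟨by omega, fun hM => hMs (mem_of_mem_erase hM)⟩

theorem exists_lt_notMem_of_card_le {s : Finset ℕ} (hcard : #s ≤ M)
    (hMs : M ∈ s) : ∃ x < M, x ∉ s := by
  by_contra! hall
  have : range (M + 1) ⊆ s := fun x hx =>
    (Nat.lt_succ_iff.1 (mem_range.1 hx)).lt_or_eq.elim (hall x) (· ▸ hMs)
  have := card_le_card this
  rw [card_range] at this
  omega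

theorem IsShifted.nonMemberSubfamily_nonempty (hsh : IsShifted 𝒜)
    (h : 𝒜 ⊆ powersetCard k (range (M + 1))) (hkM : k ≤ M) (hne : 𝒜.Nonempty) :
    (𝒜.nonMemberSubfamily M).Nonempty := by
  obtain ⟨s, hs⟩ := hne
  have hsk := (mem_powersetCard.1 (h hs)).2
  by_cases hMs : M ∈ s
  · obtain ⟨x, hxM, hxs⟩ := exists_lt_notMem_of_card_le (hsk ▸ hkM) hMs
    refine ⟨_, mem_nonMemberSubfamily.2 ⟨hsh hxM hs hMs hxs, ?_⟩⟩
    simp [hxM.ne']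
  · exact ⟨s, mem_nonMemberSubfamily.2 ⟨hs, hMs⟩⟩

theorem forall_memberSubfamily_not_disjoint {Y : Finset ℕ} (hY : ∀ s ∈ 𝒜, ¬Disjoint s Y)
    (hMY : M ∉ Y) : ∀ s ∈ 𝒜.memberSubfamily M, ¬Disjoint s Y :=
  fun _ hs hsY => hY _ (mem_memberSubfamily.1 hs).1 (disjoint_insert_left.2 ⟨hMY, hsY⟩)

theorem CrossIntersecting.nonMemberSubfamily (h : CrossIntersecting 𝒜 ℬ) :
    CrossIntersecting (𝒜.nonMemberSubfamily M) (ℬ.nonMemberSubfamily M) :=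
  h.mono (filter_subset _ _) (filter_subset _ _)

/-- If `s ∪ {M} ∈ 𝒜` and `t ∪ {M} ∈ ℬ` met only in `M`, shifting `M` to a spare element outside
`s ∪ t` would give a member of `𝒜` disjoint from `t ∪ {M}`. -/
theorem CrossIntersecting.memberSubfamily {a b : ℕ} (h : CrossIntersecting 𝒜 ℬ) (hsh : IsShifted 𝒜)
    (h𝒜 : 𝒜 ⊆ powersetCard a (range (M + 1))) (hℬ : ℬ ⊆ powersetCard b (range (M + 1)))
    (hab : a + b ≤ M + 1) :
    CrossIntersecting (𝒜.memberSubfamily M) (ℬ.memberSubfamily M) := by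
  intro s hs t ht hst
  obtain ⟨hs𝒜, hMs⟩ := mem_memberSubfamily.1 hs
  obtain ⟨ht𝒜, hMt⟩ := mem_memberSubfamily.1 ht
  have hsa' := (mem_powersetCard.1 (h𝒜 hs𝒜)).2
  have htb' := (mem_powersetCard.1 (hℬ ht𝒜)).2
  rw [card_insert_of_notMem hMs] at hsa'
  rw [card_insert_of_notMem hMt] at htb'
  have hcard : #(s ∪ t) < M := by
    rw [card_union_of_disjoint hst]
    omega
  obtain ⟨x, hx, hxst⟩ := exists_mem_notMem_of_card_lt_card (s := s ∪ t) (t := range M)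
    (by simpa using hcard)
  rw [mem_range] at hx
  rw [mem_union, not_or] at hxst
  have hshifted := hsh hx hs𝒜 (mem_insert_self _ _) (by simp [hxst.1, hx.ne])
  rw [erase_insert hMs] at hshifted
  obtain ⟨y, hy, hyt⟩ := not_disjoint_iff.1 (h _ hshifted _ ht𝒜)
  rcases mem_insert.1 hy with rfl | hys
  · rcases mem_insert.1 hyt with hyM | hyt
    · omega
    · exact hxst.2 hyt
  · rcases mem_insert.1 hyt with rfl | hyt
    · exact hMs hys
    · exact disjoint_left.1 hst hys hyt

end Link

theorem IsShifted.Icc_mem {𝒜 : Finset (Finset ℕ)} (hsh : IsShifted 𝒜) {s : Finset ℕ} (hs : s ∈ 𝒜)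
    (h0s : 0 ∉ s) : Icc 1 #s ∈ 𝒜 := by
  induction hw : ∑ x ∈ s, x using Nat.strong_induction_on generalizing s with
  | _ w ih =>
  by_cases hsI : s = Icc 1 #s
  · exact hsI ▸ hs
  have hcard : #(Icc 1 #s) = #s := by simp
  obtain ⟨j, hjs, hjI⟩ : ∃ j ∈ s, j ∉ Icc 1 #s := by
    by_contra! hsub
    exact hsI (eq_of_subset_of_card_le hsub hcard.le)
  obtain ⟨i, hiI, his⟩ : ∃ i ∈ Icc 1 #s, i ∉ s := by
    by_contra! hsub
    exact hsI (eq_of_subset_of_card_le hsub hcard.ge).symm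
  have hj0 : j ≠ 0 := fun h => h0s (h ▸ hjs)
  rw [mem_Icc] at hiI hjI
  have hij : i < j := by omega
  have hcard' : #(insert i (s.erase j)) = #s := by
    rw [card_insert_of_notMem (fun h => his (mem_of_mem_erase h)), card_erase_add_one hjs]
  have := ih _ (hw ▸ sum_insert_erase_lt hij hjs his) (hsh hij hs hjs his)
    (by simp only [mem_insert, not_or]; exact ⟨by omega, fun h => h0s (mem_of_mem_erase h)⟩) rfl
  rwa [hcard'] at this

section Relabel

variable {α β : Type*} [DecidableEq β] {f : α → β} {X : Finset α} {Y : Finset β}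
  {𝒜 ℬ : Finset (Finset α)} {k : ℕ}

theorem image_image_subset_powersetCard (hf : Set.InjOn f X) (hXY : Set.MapsTo f X Y)
    (h𝒜 : 𝒜 ⊆ powersetCard k X) : 𝒜.image (image f) ⊆ powersetCard k Y := by
  intro t ht
  obtain ⟨s, hs, rfl⟩ := mem_image.1 ht
  obtain ⟨hsX, hsk⟩ := mem_powersetCard.1 (h𝒜 hs)
  refine mem_powersetCard.2 ⟨image_subset_iff.2 fun x hx => hXY (hsX hx), ?_⟩
  rw [card_image_of_injOn (hf.mono (coe_subset.2 hsX)), hsk]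

theorem card_image_image (hf : Set.InjOn f X) (h𝒜 : 𝒜 ⊆ powersetCard k X) :
    #(𝒜.image (image f)) = #𝒜 := by
  refine card_image_of_injOn fun s hs t ht hst => ?_
  have hsX := (mem_powersetCard.1 (h𝒜 hs)).1
  have htX := (mem_powersetCard.1 (h𝒜 ht)).1
  have key : ∀ {s t : Finset α}, s ⊆ X → t ⊆ X → s.image f = t.image f → s ⊆ t := by
    intro s t hsX htX hst x hx
    obtain ⟨y, hy, hyx⟩ := mem_image.1 (hst ▸ mem_image_of_mem f hx : f x ∈ t.image f)
    exact hf (htX hy) (hsX hx) hyx ▸ hy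
  exact (key hsX htX hst).antisymm (key htX hsX hst.symm)

theorem CrossIntersecting.image (h : CrossIntersecting 𝒜 ℬ) (f : α → β) :
    CrossIntersecting (𝒜.image (image f)) (ℬ.image (image f)) := by
  simp only [CrossIntersecting, mem_image]
  rintro _ ⟨s, hs, rfl⟩ _ ⟨t, ht, rfl⟩
  obtain ⟨x, hxs, hxt⟩ := not_disjoint_iff.1 (h s hs t ht)
  exact not_disjoint_iff.2 ⟨f x, mem_image_of_mem f hxs, mem_image_of_mem f hxt⟩

end Relabel

theorem erdos_ko_rado_range {𝒜 : Finset (Finset ℕ)} {k M : ℕ}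
    (h𝒜 : 𝒜 ⊆ powersetCard k (range M)) (h : CrossIntersecting 𝒜 𝒜) (hkM : 2 * k ≤ M) :
    #𝒜 ≤ (M - 1).choose (k - 1) := by
  rcases 𝒜.eq_empty_or_nonempty with rfl | ⟨s, hs⟩
  · simp
  obtain ⟨x, hx, -⟩ := not_disjoint_iff.1 (h s hs s hs)
  have : NeZero M := ⟨(mem_range.1 ((mem_powersetCard.1 (h𝒜 hs)).1 hx)).ne_zero⟩
  have hf : Set.InjOn (Fin.ofNat M) (range M : Set ℕ) := fun x hx y hy hxy => by
    simpa [Nat.mod_eq_of_lt (mem_range.1 hx), Nat.mod_eq_of_lt (mem_range.1 hy)] using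
      congrArg Fin.val hxy
  have hsub := image_image_subset_powersetCard hf (fun _ _ => mem_coe.2 (mem_univ _)) h𝒜
  rw [← card_image_image hf h𝒜]
  refine erdos_ko_rado (crossIntersecting_self_iff.1 (h.image _)) (fun t ht => ?_) (by omega)
  exact (mem_powersetCard.1 (hsub ht)).2

theorem card_add_card_le_choose {α : Type*} [DecidableEq α] {𝒜 ℬ : Finset (Finset α)}
    {X : Finset α} {a b : ℕ} (h𝒜 : 𝒜 ⊆ powersetCard a X) (hℬ : ℬ ⊆ powersetCard b X)
    (hab : a + b = #X) (h : CrossIntersecting 𝒜 ℬ) : #𝒜 + #ℬ ≤ (#X).choose a := by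
  have hcompl : ℬ.image (X \ ·) ⊆ powersetCard a X := by
    intro s hs
    obtain ⟨t, ht, rfl⟩ := mem_image.1 hs
    obtain ⟨htX, htb⟩ := mem_powersetCard.1 (hℬ ht)
    exact mem_powersetCard.2 ⟨sdiff_subset, by rw [card_sdiff_of_subset htX]; omega⟩
  have hcard : #(ℬ.image (X \ ·)) = #ℬ := by
    refine card_image_of_injOn fun s hs t ht hst => ?_
    have := congrArg (X \ ·) hst
    simpa only [Finset.sdiff_sdiff_eq_self (mem_powersetCard.1 (hℬ hs)).1,
      Finset.sdiff_sdiff_eq_self (mem_powersetCard.1 (hℬ ht)).1] using this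
  have hdisj : Disjoint 𝒜 (ℬ.image (X \ ·)) := by
    refine disjoint_left.2 fun s hs hs' => ?_
    obtain ⟨t, ht, rfl⟩ := mem_image.1 hs'
    exact h _ hs t ht sdiff_disjoint
  have := card_le_card (union_subset h𝒜 hcompl)
  rwa [card_union_of_disjoint hdisj, hcard, card_powersetCard] at this

section CrossHiltonMilner

variable {𝒜 ℬ : Finset (Finset ℕ)} {a M : ℕ}

theorem eq_of_not_disjoint_of_card_eq_one {s t : Finset ℕ} (hs : #s = 1) (ht : #t = 1)
    (hst : ¬Disjoint s t) : s = t := by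
  obtain ⟨x, rfl⟩ := card_eq_one.1 hs
  obtain ⟨y, rfl⟩ := card_eq_one.1 ht
  simpa using hst

theorem card_memberSubfamily_add_choose_le (h : CrossIntersecting 𝒜 ℬ) {s : Finset ℕ} (hs : s ∈ 𝒜)
    (h𝒜 : 𝒜 ⊆ powersetCard a (range (M + 1))) (hℬ : ℬ ⊆ powersetCard a (range (M + 1)))
    (hMs : M ∉ s) :
    #(ℬ.memberSubfamily M) + (M - a).choose (a - 1) ≤ M.choose (a - 1) := by
  have := card_add_choose_le_of_forall_not_disjoint (memberSubfamily_subset_powersetCard hℬ)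
    (forall_memberSubfamily_not_disjoint (fun t ht hts => h s hs t ht hts.symm) hMs)
  rwa [card_range, (mem_powersetCard.1 (h𝒜 hs)).2] at this

theorem memberSubfamily_eq_empty_iff {M : ℕ} :
    𝒜.memberSubfamily M = ∅ ↔ ∀ s ∈ 𝒜, M ∉ s := by
  simp [memberSubfamily, filter_eq_empty_iff]

theorem IsShifted.card_add_card_add_choose_le (hsh𝒜 : IsShifted 𝒜) (hshℬ : IsShifted ℬ)
    (h𝒜 : 𝒜 ⊆ powersetCard a (range M)) (hℬ : ℬ ⊆ powersetCard a (range M))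
    (h : CrossIntersecting 𝒜 ℬ) (h𝒜ne : 𝒜.Nonempty) (hℬne : ℬ.Nonempty) (ha : 1 ≤ a)
    (haM : 2 * a ≤ M) : #𝒜 + #ℬ + (M - a).choose a ≤ M.choose a + 1 := by
  induction M generalizing a 𝒜 ℬ with
  | zero => omega
  | succ M ih =>
  obtain ⟨s, hs⟩ := h𝒜ne
  obtain ⟨t, ht⟩ := hℬne
  rcases ha.eq_or_lt with rfl | ha
  · have hsingle : ∀ s ∈ 𝒜, ∀ t ∈ ℬ, s = t := fun s hs t ht =>
      eq_of_not_disjoint_of_card_eq_one (mem_powersetCard.1 (h𝒜 hs)).2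
        (mem_powersetCard.1 (hℬ ht)).2 (h s hs t ht)
    have h𝒜1 : #𝒜 ≤ 1 := card_le_one.2 fun s hs s' hs' =>
      (hsingle s hs t ht).trans (hsingle s' hs' t ht).symm
    have hℬ1 : #ℬ ≤ 1 := card_le_one.2 fun t ht t' ht' =>
      (hsingle s hs t ht).symm.trans (hsingle s hs t' ht')
    simp only [Nat.choose_one_right]
    omega
  rcases haM.eq_or_lt with hM | hM
  · have := card_add_card_le_choose h𝒜 hℬ (by rw [card_range]; omega) h
    rw [card_range] at this
    rw [show M + 1 - a = a by omega, Nat.choose_self]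
    omega
  have hdel := ih (hsh𝒜.nonMemberSubfamily h𝒜) (hshℬ.nonMemberSubfamily hℬ)
    (nonMemberSubfamily_subset_powersetCard h𝒜) (nonMemberSubfamily_subset_powersetCard hℬ)
    h.nonMemberSubfamily (hsh𝒜.nonMemberSubfamily_nonempty h𝒜 (by omega) ⟨s, hs⟩)
    (hshℬ.nonMemberSubfamily_nonempty hℬ (by omega) ⟨t, ht⟩) (by omega) (by omega)
  have h𝒜split := card_memberSubfamily_add_card_nonMemberSubfamily M 𝒜
  have hℬsplit := card_memberSubfamily_add_card_nonMemberSubfamily M ℬ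
  have p₁ := Nat.choose_succ_succ_of_eq (n := M) (k := a - 1) (N := M + 1) (K := a) rfl (by omega)
  have p₂ := Nat.choose_succ_succ_of_eq (n := M - a) (k := a - 1) (N := M + 1 - a) (K := a)
    (by omega) (by omega)
  rcases (𝒜.memberSubfamily M).eq_empty_or_nonempty with hc𝒜 | hc𝒜
  · have := card_memberSubfamily_add_choose_le h hs h𝒜 hℬ
      (memberSubfamily_eq_empty_iff.1 hc𝒜 s hs)
    rw [hc𝒜, card_empty] at h𝒜split
    omega
  rcases (ℬ.memberSubfamily M).eq_empty_or_nonempty with hcℬ | hcℬ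
  · have := card_memberSubfamily_add_choose_le h.symm ht hℬ h𝒜
      (memberSubfamily_eq_empty_iff.1 hcℬ t ht)
    rw [hcℬ, card_empty] at hℬsplit
    omega
  have hcontr := ih (hsh𝒜.memberSubfamily h𝒜) (hshℬ.memberSubfamily hℬ)
    (memberSubfamily_subset_powersetCard h𝒜) (memberSubfamily_subset_powersetCard hℬ)
    (h.memberSubfamily hsh𝒜 h𝒜 hℬ (by omega)) hc𝒜 hcℬ (by omega) (by omega)
  have p₃ := Nat.choose_succ_succ_of_eq (n := M - a) (k := a - 2) (N := M - (a - 1)) (K := a - 1)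
    (by omega) (by omega)
  have := Nat.choose_pos (n := M - a) (k := a - 2) (by omega)
  omega

theorem CrossIntersecting.card_add_card_add_choose_le (h : CrossIntersecting 𝒜 ℬ)
    (h𝒜 : 𝒜 ⊆ powersetCard a (range M)) (hℬ : ℬ ⊆ powersetCard a (range M))
    (h𝒜ne : 𝒜.Nonempty) (hℬne : ℬ.Nonempty) (ha : 1 ≤ a) (haM : 2 * a ≤ M) :
    #𝒜 + #ℬ + (M - a).choose a ≤ M.choose a + 1 := by
  obtain ⟨𝒜', ℬ', h𝒜', hℬ', h𝒜'sub, hℬ'sub, h', hsh𝒜', hshℬ'⟩ :=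
    exists_isShifted_crossIntersecting h𝒜 hℬ h
  rw [← h𝒜', ← hℬ']
  exact hsh𝒜'.card_add_card_add_choose_le hshℬ' h𝒜'sub hℬ'sub h'
    (card_pos.1 (h𝒜' ▸ card_pos.2 h𝒜ne)) (card_pos.1 (hℬ' ▸ card_pos.2 hℬne)) ha haM

end CrossHiltonMilner

section ShiftedHiltonMilner

variable {𝒜 : Finset (Finset ℕ)} {k c M : ℕ}

theorem IsShifted.eq_empty_of_meets_Icc (hsh : IsShifted 𝒜) (h𝒜 : 𝒜 ⊆ powersetCard 1 (range M))
    (hmeet : ∀ s ∈ 𝒜, ¬Disjoint s (Icc 1 c)) : 𝒜 = ∅ := by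
  refine eq_empty_iff_forall_notMem.2 fun s hs => ?_
  obtain ⟨x, rfl⟩ := card_eq_one.1 (mem_powersetCard.1 (h𝒜 hs)).2
  have hx : 0 < x := (by simpa using hmeet _ hs : 1 ≤ x ∧ x ≤ c).1
  have h0 := hsh hx hs (mem_singleton_self x) (by simp [hx.ne])
  rw [erase_singleton, insert_empty_eq] at h0
  exact hmeet _ h0 (by simp)

theorem IsShifted.card_add_choose_le_of_meets_Icc (hsh : IsShifted 𝒜)
    (h𝒜 : 𝒜 ⊆ powersetCard k (range M)) (hinter : CrossIntersecting 𝒜 𝒜)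
    (hmeet : ∀ s ∈ 𝒜, ¬Disjoint s (Icc 1 c)) (hkc : k + 1 ≤ c) (hcM : c + k ≤ M + 1) :
    #𝒜 + (M - c - 1).choose (k - 1) ≤ (M - 1).choose (k - 1) := by
  induction k generalizing 𝒜 M with
  | zero =>
    have : 𝒜 = ∅ := eq_empty_iff_forall_notMem.2 fun s hs => hmeet s hs <| by
      simp [card_eq_zero.1 (mem_powersetCard.1 (h𝒜 hs)).2]
    simp [this]
  | succ k ih =>
  rcases Nat.eq_zero_or_pos k with rfl | hk
  · simp [hsh.eq_empty_of_meets_Icc h𝒜 hmeet]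
  induction M, (show c + k ≤ M by omega) using Nat.le_induction generalizing 𝒜 with
  | base =>
    have := erdos_ko_rado_range h𝒜 hinter (by omega)
    rw [show c + k - c - 1 = k - 1 by omega,
      Nat.choose_eq_zero_of_lt (by omega : k - 1 < k + 1 - 1)]
    simpa using this
  | succ M hM ihM =>
  have hdel := ihM (hsh.nonMemberSubfamily h𝒜) (nonMemberSubfamily_subset_powersetCard h𝒜)
    (hinter.nonMemberSubfamily) (fun s hs => hmeet s (mem_nonMemberSubfamily.1 hs).1) (by omega)
  have hcontr := ih (hsh.memberSubfamily h𝒜) (memberSubfamily_subset_powersetCard h𝒜)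
    (hinter.memberSubfamily hsh h𝒜 h𝒜 (by omega))
    (forall_memberSubfamily_not_disjoint hmeet (by rw [mem_Icc]; omega)) (by omega) (by omega)
  have hsplit := card_memberSubfamily_add_card_nonMemberSubfamily M 𝒜
  have p₁ := Nat.choose_succ_succ_of_eq (n := M - 1) (k := k - 1) (N := M) (K := k)
    (by omega) (by omega)
  have p₂ := Nat.choose_succ_succ_of_eq (n := M - c - 1) (k := k - 1) (N := M - c) (K := k)
    (by omega) (by omega)
  simp only [Nat.add_sub_cancel] at hdel hcontr ⊢
  rw [show M + 1 - c - 1 = M - c by omega]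
  omega

theorem IsShifted.card_add_choose_le (hsh : IsShifted 𝒜) (h𝒜 : 𝒜 ⊆ powersetCard k (range M))
    (hinter : CrossIntersecting 𝒜 𝒜) (h0 : ∃ s ∈ 𝒜, 0 ∉ s) (hk : 2 ≤ k) (hkM : 2 * k ≤ M) :
    #𝒜 + (M - k - 1).choose (k - 1) ≤ (M - 1).choose (k - 1) + 1 := by
  induction M, hkM using Nat.le_induction generalizing 𝒜 with
  | base =>
    have := erdos_ko_rado_range h𝒜 hinter le_rfl
    rw [show 2 * k - k - 1 = k - 1 by omega, Nat.choose_self]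
    omega
  | succ M hM ih =>
  obtain ⟨s, hs, h0s⟩ := h0
  have hIcc : Icc 1 k ∈ 𝒜 := (mem_powersetCard.1 (h𝒜 hs)).2 ▸ hsh.Icc_mem hs h0s
  have hMIcc : M ∉ Icc 1 k := by rw [mem_Icc]; omega
  have hdel := ih (hsh.nonMemberSubfamily h𝒜) (nonMemberSubfamily_subset_powersetCard h𝒜)
    hinter.nonMemberSubfamily ⟨Icc 1 k, mem_nonMemberSubfamily.2 ⟨hIcc, hMIcc⟩, by simp⟩
  have hcontr := (hsh.memberSubfamily h𝒜).card_add_choose_le_of_meets_Icc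
    (memberSubfamily_subset_powersetCard h𝒜) (hinter.memberSubfamily hsh h𝒜 h𝒜 (by omega))
    (forall_memberSubfamily_not_disjoint (fun t ht => hinter t ht _ hIcc) hMIcc)
    (by omega) (by omega)
  have hsplit := card_memberSubfamily_add_card_nonMemberSubfamily M 𝒜
  have p₁ := Nat.choose_succ_succ_of_eq (n := M - 1) (k := k - 2) (N := M) (K := k - 1)
    (by omega) (by omega)
  have p₂ := Nat.choose_succ_succ_of_eq (n := M - k - 1) (k := k - 2) (N := M - k) (K := k - 1)
    (by omega) (by omega)
  rw [show k - 1 - 1 = k - 2 by omega] at hcontr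
  rw [show M + 1 - k - 1 = M - k by omega, Nat.add_sub_cancel]
  omega

end ShiftedHiltonMilner

theorem exists_injOn_mapsTo_range {α : Type*} (D : Finset α) :
    ∃ f : α → ℕ, Set.InjOn f D ∧ Set.MapsTo f D (range #D) := by
  classical
  refine ⟨fun x => if h : x ∈ D then (D.equivFin ⟨x, h⟩ : ℕ) else 0, fun x hx y hy hxy => ?_,
    fun x hx => ?_⟩
  · simp only [mem_coe] at hx hy
    simp only [hx, hy, dite_true] at hxy
    simpa using D.equivFin.injective (Fin.ext hxy)
  · simp only [mem_coe] at hx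
    simp [hx]

section HiltonMilner

variable {𝒜 : Finset (Finset ℕ)} {k M : ℕ}

/-- The members containing exactly one of `x`, `y` form, once it is deleted, a pair of
cross-intersecting families on the `M - 2` remaining points; those containing both number at most
`C(M-2, k-2)`. -/
theorem card_add_choose_le_of_forall_mem_or_mem {x y : ℕ} (hxy : x ≠ y) (hxM : x < M) (hyM : y < M)
    (h𝒜 : 𝒜 ⊆ powersetCard k (range M)) (hinter : CrossIntersecting 𝒜 𝒜)
    (hx : ∃ s ∈ 𝒜, x ∉ s) (hy : ∃ s ∈ 𝒜, y ∉ s) (hcover : ∀ s ∈ 𝒜, x ∈ s ∨ y ∈ s)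
    (hk : 2 ≤ k) (hkM : 2 * k ≤ M) :
    #𝒜 + (M - k - 1).choose (k - 1) ≤ (M - 1).choose (k - 1) + 1 := by
  set D := ((range M).erase y).erase x
  have hD : #D = M - 2 := by
    rw [card_erase_of_mem (mem_erase.2 ⟨hxy, mem_range.2 hxM⟩), card_erase_of_mem (mem_range.2 hyM),
      card_range]
    omega
  have hy𝒜 := memberSubfamily_subset_powersetCard_erase (a := y) h𝒜
  have hny𝒜 := nonMemberSubfamily_subset_powersetCard_erase (a := y) h𝒜
  set 𝒜₁ := (𝒜.nonMemberSubfamily y).memberSubfamily x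
  set 𝒜₂ := (𝒜.memberSubfamily y).nonMemberSubfamily x
  set 𝒜₁₂ := (𝒜.memberSubfamily y).memberSubfamily x
  have h𝒜₁ : 𝒜₁ ⊆ powersetCard (k - 1) D := memberSubfamily_subset_powersetCard_erase hny𝒜
  have h𝒜₂ : 𝒜₂ ⊆ powersetCard (k - 1) D := nonMemberSubfamily_subset_powersetCard_erase hy𝒜
  have h𝒜₁₂ : 𝒜₁₂ ⊆ powersetCard (k - 1 - 1) D := memberSubfamily_subset_powersetCard_erase hy𝒜
  have hsplit : #𝒜 = #𝒜₁ + #𝒜₂ + #𝒜₁₂ := by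
    have hnone : (𝒜.nonMemberSubfamily y).nonMemberSubfamily x = ∅ := by
      simp only [nonMemberSubfamily, filter_filter, filter_eq_empty_iff]
      exact fun s hs => by have := hcover s hs; tauto
    have e₁ : #𝒜₁ = #(𝒜.nonMemberSubfamily y) := by
      simpa [hnone] using
        card_memberSubfamily_add_card_nonMemberSubfamily x (𝒜.nonMemberSubfamily y)
    have e₂ : #𝒜₁₂ + #𝒜₂ = #(𝒜.memberSubfamily y) :=
      card_memberSubfamily_add_card_nonMemberSubfamily x _
    have e₃ := card_memberSubfamily_add_card_nonMemberSubfamily y 𝒜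
    omega
  have hcross : CrossIntersecting 𝒜₁ 𝒜₂ := by
    intro s hs t ht hst
    simp only [𝒜₁, 𝒜₂, mem_memberSubfamily, mem_nonMemberSubfamily] at hs ht
    obtain ⟨z, hzs, hzt⟩ := not_disjoint_iff.1 (hinter _ hs.1.1 _ ht.1.1)
    simp only [mem_insert] at hzs hzt
    rcases hzs with rfl | hzs
    · exact ht.2 (hzt.resolve_left hxy)
    rcases hzt with rfl | hzt
    · exact hs.1.2 (mem_insert_of_mem hzs)
    · exact disjoint_left.1 hst hzs hzt
  have h𝒜₁ne : 𝒜₁.Nonempty := by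
    obtain ⟨s, hs, hys⟩ := hy
    have hxs := (hcover s hs).resolve_right hys
    refine ⟨s.erase x, mem_memberSubfamily.2 ⟨?_, notMem_erase x s⟩⟩
    rw [insert_erase hxs]
    exact mem_nonMemberSubfamily.2 ⟨hs, hys⟩
  have h𝒜₂ne : 𝒜₂.Nonempty := by
    obtain ⟨s, hs, hxs⟩ := hx
    have hys := (hcover s hs).resolve_left hxs
    refine ⟨s.erase y, mem_nonMemberSubfamily.2 ⟨mem_memberSubfamily.2 ⟨?_, notMem_erase y s⟩,
      fun h => hxs (mem_of_mem_erase h)⟩⟩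
    rwa [insert_erase hys]
  obtain ⟨f, hf, hfD⟩ := exists_injOn_mapsTo_range D
  have hpair := (hcross.image f).card_add_card_add_choose_le
    (image_image_subset_powersetCard hf hfD h𝒜₁) (image_image_subset_powersetCard hf hfD h𝒜₂)
    (h𝒜₁ne.image _) (h𝒜₂ne.image _) (by omega) (by omega)
  rw [card_image_image hf h𝒜₁, card_image_image hf h𝒜₂, hD] at hpair
  have h𝒜₁₂card := (card_le_card h𝒜₁₂).trans_eq (card_powersetCard _ _)
  rw [hD] at h𝒜₁₂card
  have p := Nat.choose_succ_succ_of_eq (n := M - 2) (k := k - 1 - 1) (N := M - 1) (K := k - 1)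
    (by omega) (by omega)
  rw [show M - 2 - (k - 1) = M - k - 1 by omega] at hpair
  omega

/-- Shift as long as the family keeps no common point; if a shift creates one, every member
contains one of the two shifted points. -/
theorem hilton_milner (h𝒜 : 𝒜 ⊆ powersetCard k (range M))
    (hinter : (𝒜 : Set (Finset ℕ)).Intersecting)
    (hnt : ∀ x, ∃ s ∈ 𝒜, x ∉ s) (hk : 2 ≤ k) (hkM : 2 * k ≤ M) :
    #𝒜 + (M - k - 1).choose (k - 1) ≤ (M - 1).choose (k - 1) + 1 := by
  rw [← crossIntersecting_self_iff] at hinter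
  induction hw : weight 𝒜 using Nat.strong_induction_on generalizing 𝒜 with
  | _ w ih =>
  by_cases hfix : ∀ i j, i < j → shift i j 𝒜 = 𝒜
  · exact (isShifted_of_forall_shift_eq hfix).card_add_choose_le h𝒜 hinter (hnt 0) hk hkM
  push Not at hfix
  obtain ⟨i, j, hij, hmoved⟩ := hfix
  by_cases hnt' : ∀ x, ∃ s ∈ shift i j 𝒜, x ∉ s
  · rw [← card_shift i j 𝒜]
    exact ih _ (hw ▸ weight_shift_lt hij hmoved) (shift_subset_powersetCard hij h𝒜) hinter.shift
      hnt' rfl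
  push Not at hnt'
  obtain ⟨z, hz⟩ := hnt'
  have hzi : z = i := by
    by_contra hzi
    obtain ⟨s, hs, hzs⟩ := hnt z
    have := shiftSet_subset_insert s (hz _ (mem_image_of_mem _ hs))
    exact hzs ((mem_insert.1 this).resolve_left hzi)
  rw [hzi] at hz
  have hcover : ∀ s ∈ 𝒜, i ∈ s ∨ j ∈ s := by
    intro s hs
    have := hz _ (mem_image_of_mem _ hs)
    unfold shiftSet at this
    split_ifs at this with hmove
    · exact Or.inr hmove.1
    · exact Or.inl this
  obtain ⟨s, hs, hjs, -⟩ := exists_mem_of_shift_ne hmoved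
  have hjM := mem_range.1 ((mem_powersetCard.1 (h𝒜 hs)).1 hjs)
  exact card_add_choose_le_of_forall_mem_or_mem hij.ne (hij.trans hjM) hjM h𝒜 hinter (hnt i)
    (hnt j) hcover hk hkM

end HiltonMilner

/-- Adding `B` keeps the family intersecting: either the enlarged family has no common point and
Hilton–Milner applies, or all members share a point of `B`, hence outside `A`. -/
theorem card_add_choose_le_of_forall_not_disjoint_of_disjoint {𝒜 : Finset (Finset ℕ)}
    {A B : Finset ℕ} {n m : ℕ} (h𝒜 : 𝒜 ⊆ powersetCard n (range m))
    (hinter : (𝒜 : Set (Finset ℕ)).Intersecting) (hA : #A = n) (hB : B ∈ powersetCard n (range m))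
    (hAB : Disjoint A B) (h𝒜A : ∀ s ∈ 𝒜, ¬Disjoint s A) (h𝒜B : ∀ s ∈ 𝒜, ¬Disjoint s B)
    (hn : 2 ≤ n) (hnm : 2 * n ≤ m) :
    #𝒜 + (m - n - 1).choose (n - 1) ≤ (m - 1).choose (n - 1) := by
  obtain ⟨hBm, hBn⟩ := mem_powersetCard.1 hB
  have hB𝒜 : B ∉ 𝒜 := fun h => h𝒜A B h hAB.symm
  have hinsert : insert B 𝒜 ⊆ powersetCard n (range m) := insert_subset hB h𝒜
  have hinter' : ((insert B 𝒜 : Finset (Finset ℕ)) : Set (Finset ℕ)).Intersecting := by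
    rw [coe_insert]
    refine hinter.insert (card_pos.1 (by omega)).ne_empty fun s hs => ?_
    exact fun h => h𝒜B s hs h.symm
  by_cases hnt : ∀ x, ∃ s ∈ insert B 𝒜, x ∉ s
  · have := hilton_milner hinsert hinter' hnt hn hnm
    rw [card_insert_of_notMem hB𝒜] at this
    omega
  push Not at hnt
  obtain ⟨z, hz⟩ := hnt
  have hzB := hz B (mem_insert_self _ _)
  have := card_add_choose_le_of_forall_mem (hBm hzB) (disjoint_right.1 hAB hzB) h𝒜
    (fun s hs => hz s (mem_insert_of_mem hs)) h𝒜A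
  rwa [card_range, hA, show m - 1 - n = m - n - 1 by omega] at this

end SetFamily

namespace kneser

open Finset SetFamily

variable {m n : ℕ} {P : Set {A : Finset (Fin m) // A.card = n}}

theorem map_filter_subset_powersetCard [DecidablePred (· ∈ P)] :
    (univ.filter (· ∈ P)).map (Function.Embedding.subtype _) ⊆ powersetCard n univ := by
  intro s hs
  obtain ⟨v, -, rfl⟩ := mem_map.1 hs
  exact mem_powersetCard.2 ⟨subset_univ _, v.2⟩

theorem intersecting_of_isIndep [DecidablePred (· ∈ P)] (hP : IsIndep (kneser m n) P) (hn : 1 ≤ n) :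
    (((univ.filter (· ∈ P)).map (Function.Embedding.subtype _) : Finset (Finset (Fin m))) :
      Set (Finset (Fin m))).Intersecting := by
  simp only [coe_map, coe_filter, mem_univ, true_and]
  rintro _ ⟨u, hu, rfl⟩ _ ⟨v, hv, rfl⟩ huv
  by_cases h : u = v
  · subst h
    simp only [Function.Embedding.coe_subtype, disjoint_self, bot_eq_empty] at huv
    have := u.2
    rw [huv, card_empty] at this
    omega
  · exact hP hu hv ⟨h, huv⟩

theorem card_filter_le_of_isIndep [DecidablePred (· ∈ P)] (hP : IsIndep (kneser m n) P)
    (hn : 1 ≤ n) (hnm : 2 * n ≤ m) :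
    #(univ.filter (· ∈ P)) ≤ (m - 1).choose (n - 1) := by
  rw [← card_map (Function.Embedding.subtype _)]
  refine erdos_ko_rado (intersecting_of_isIndep hP hn) (fun s hs => ?_) (by omega)
  exact (mem_powersetCard.1 (map_filter_subset_powersetCard hs)).2

theorem not_disjoint_of_supported {u v w : {A : Finset (Fin m) // A.card = n}}
    (huv : (kneser m n).Adj u v)
    (hsupp : ((kneser m n).neighborSet u ∪ (kneser m n).neighborSet v) ∩ P = ∅) (hw : w ∈ P) :
    ¬Disjoint w.1 u.1 := by
  intro hwu
  have hwu' : w ≠ u := by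
    rintro rfl
    exact (Set.eq_empty_iff_forall_notMem.1 hsupp) w ⟨Or.inr huv.symm, hw⟩
  exact (Set.eq_empty_iff_forall_notMem.1 hsupp) w ⟨Or.inl ⟨hwu'.symm, hwu.symm⟩, hw⟩

theorem card_filter_add_choose_le_of_supported [DecidablePred (· ∈ P)] (hP : IsIndep (kneser m n) P)
    {u v : {A : Finset (Fin m) // A.card = n}} (huv : (kneser m n).Adj u v)
    (hsupp : ((kneser m n).neighborSet u ∪ (kneser m n).neighborSet v) ∩ P = ∅)
    (hn : 2 ≤ n) (hnm : 2 * n ≤ m) :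
    #(univ.filter (· ∈ P)) + (m - n - 1).choose (n - 1) ≤ (m - 1).choose (n - 1) := by
  have hval : Set.InjOn (Fin.val : Fin m → ℕ) (univ : Finset (Fin m)) := Fin.val_injective.injOn
  have hmaps : Set.MapsTo (Fin.val : Fin m → ℕ) (univ : Finset (Fin m)) (range m) :=
    fun x _ => mem_range.2 x.2
  have hmeet : ∀ {u v : {A : Finset (Fin m) // A.card = n}}, (kneser m n).Adj u v →
      ((kneser m n).neighborSet u ∪ (kneser m n).neighborSet v) ∩ P = ∅ →
      ∀ s ∈ ((univ.filter (· ∈ P)).map (Function.Embedding.subtype _)).image (image Fin.val),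
        ¬Disjoint s (u.1.image Fin.val) := by
    intro u v huv hsupp s hs
    obtain ⟨s, hs', rfl⟩ := mem_image.1 hs
    obtain ⟨w, hw, rfl⟩ := mem_map.1 hs'
    rw [disjoint_image Fin.val_injective]
    exact not_disjoint_of_supported huv hsupp (mem_filter.1 hw).2
  have := card_add_choose_le_of_forall_not_disjoint_of_disjoint
    (image_image_subset_powersetCard hval hmaps map_filter_subset_powersetCard)
    (crossIntersecting_self_iff.1 ((crossIntersecting_self_iff.2
      (intersecting_of_isIndep hP (by omega))).image Fin.val))
    (by rw [card_image_of_injective _ Fin.val_injective, u.2])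
    (mem_powersetCard.2 ⟨image_subset_iff.2 fun x _ => mem_range.2 x.2,
      by rw [card_image_of_injective _ Fin.val_injective, v.2]⟩)
    ((disjoint_image Fin.val_injective).2 huv.2) (hmeet huv hsupp)
    (hmeet huv.symm (Set.union_comm _ _ ▸ hsupp)) hn hnm
  rwa [card_image_image hval map_filter_subset_powersetCard, card_map] at this

end kneser

open Finset

theorem card_add_mul_le_of_partition [Fintype V] {t a α β : ℕ} (P : Fin t → Set V)
    [∀ i, DecidablePred (· ∈ P i)] (hpart : ∀ v, ∃! i, v ∈ P i)
    (hle : ∀ i, #(univ.filter (· ∈ P i)) ≤ α)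
    (hfree : ∀ i : Fin (t - a), #(univ.filter (· ∈ P (Fin.castLE (Nat.sub_le t a) i))) + β ≤ α) :
    Fintype.card V + (t - a) * β ≤ t * α := by
  classical
  have hcover : univ.biUnion (fun i => univ.filter (· ∈ P i)) = univ :=
    eq_univ_of_forall fun v => by simpa using (hpart v).exists
  have hdisj : ((univ : Finset (Fin t)) : Set (Fin t)).PairwiseDisjoint
      (fun i => univ.filter (· ∈ P i)) := by
    intro i _ j _ hij
    refine disjoint_filter.2 fun v _ hvi hvj => hij ?_
    exact (hpart v).unique hvi hvj
  have hfree' : ∀ i : Fin t, (i : ℕ) < t - a → #(univ.filter (· ∈ P i)) + β ≤ α :=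
    fun i hi => hfree ⟨i, hi⟩
  calc Fintype.card V + (t - a) * β
      = ∑ i : Fin t, (#(univ.filter (· ∈ P i)) + if (i : ℕ) < t - a then β else 0) := by
        rw [sum_add_distrib, ← card_biUnion hdisj, hcover, card_univ, sum_ite, sum_const_zero,
          sum_const, Fin.card_filter_val_lt, smul_eq_mul, min_eq_right (Nat.sub_le t a), add_zero]
    _ ≤ ∑ _i : Fin t, α := by
        refine sum_le_sum fun i _ => ?_
        split_ifs with hi
        · exact hfree' i hi
        · simpa using hle i
    _ = t * α := by simp

theorem div_le_of_add_tsub_mul_le {N t a α β : ℕ} (hβα : β < α) (h : N + (t - a) * β ≤ t * α) :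
    ((N : ℚ) - a * α) / (α - β) ≤ t := by
  have hβα' : (β : ℚ) < α := by exact_mod_cast hβα
  have hβ : t * β ≤ (t - a) * β + a * α := calc
    t * β ≤ (t - a + a) * β := Nat.mul_le_mul_right _ (by omega)
    _ = (t - a) * β + a * β := add_mul _ _ _
    _ ≤ (t - a) * β + a * α := by gcongr
  have : (N : ℚ) + t * β ≤ t * α + a * α := by exact_mod_cast (by omega : N + t * β ≤ t * α + a * α)
  rw [div_le_iff₀ (sub_pos.2 hβα')]
  linarith

theorem stmt16_general (m n a b : ℕ) (hm : 2 * n < m) :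
    ∀ t : ℕ, ABFree (kneser m n) a b t →
      ((Nat.choose m n : ℚ) - a * Nat.choose (m - 1) (n - 1)) /
          ((Nat.choose (m - 1) (n - 1) : ℚ) - Nat.choose (m - n - 1) (n - 1)) ≤ t := by
  classical
  rintro t ⟨P, e, hpart, hind, -, hsupp, -⟩
  rcases le_or_gt n 1 with hn | hn
  · -- the denominator is `1 - 1 = 0`, and `x / 0 = 0`
    simp [Nat.sub_eq_zero_of_le hn]
  refine div_le_of_add_tsub_mul_le (Nat.choose_sub_lt_choose hn (by omega)) ?_
  have := card_add_mul_le_of_partition P hpart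
    (fun i => kneser.card_filter_le_of_isIndep (hind i) (by omega) (by omega))
    (fun i => kneser.card_filter_add_choose_le_of_supported (hind _) (hsupp i).1 (hsupp i).2 hn
      (by omega))
  rwa [Fintype.card_finset_len, Fintype.card_fin] at this

/-- `φ^a_b(KG(m,n)) ≥ (C(m,n) - a·C(m-1,n-1)) / (C(m-1,n-1) - C(m-n-1,n-1))`. -/
theorem stmt16 (m n a b : ℕ) (hn : 1 ≤ n) (hm : 2 * n < m) (hb : 1 ≤ b) :
    ∀ t : ℕ, ABFree (kneser m n) a b t →
      ((Nat.choose m n : ℚ) - a * Nat.choose (m - 1) (n - 1)) /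
          ((Nat.choose (m - 1) (n - 1) : ℚ) - Nat.choose (m - n - 1) (n - 1)) ≤ t :=
  stmt16_general m n a b hm
end
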